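/- arXiv:2210.03174 — 2 statements merged into one kernel-verified Lean document; each statement's English description precedes it below -/
import Mathlib

section
/- Lace expansion identity (Proposition 3.2, coefficient form): For every dimension d≥1, every λ∈[0,1], every n≥1 and every x∈ℤ^d, c_n^λ(0,x) = Σ_{u∈ℤ^d, |u|=1} c_{n−1}^λ(u,x) + Σ_{m=1}^{n} Σ_{v∈ℤ^d} π_m(v) c_{n−m}^λ(v,x), where π_m are the lace-expansion coefficients. (This is the coefficient identity equivalent to G_z^λ(0,x) = δ_{0,x} + z Σ_{|u|=1} G_z^λ(u,x) + Σ_v Π_z^λ(v) G_z^λ(v,x) for |z|<z_c(λ).) -/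
open scoped BigOperators ENNReal
open scoped Classical

noncomputable section

namespace PrudentWalk

/-- Lattice points of `ℤ^d`. -/
abbrev Pt (d : ℕ) := Fin d → ℤ

/-- `ℓ¹`-norm on `ℤ^d`. -/
def norm1 {d : ℕ} (x : Pt d) : ℤ := ∑ i, |x i|

/-- Squared Euclidean norm of a lattice point, as a real number. -/
def norm2sq {d : ℕ} (x : Pt d) : ℝ := ∑ i, ((x i : ℝ))^2

/-- `w` is an `n`-step nearest-neighbour walk from `x` to `y`
(encoded as a function `ℕ → ℤ^d` frozen at `y` after time `n`). -/
def IsWalk {d : ℕ} (n : ℕ) (x y : Pt d) (w : ℕ → Pt d) : Prop :=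
  w 0 = x ∧ (∀ s, n ≤ s → w s = y) ∧ ∀ s < n, norm1 (w (s + 1) - w s) = 1

/-- The set `W_n(x,y)` of `n`-step nearest-neighbour walks from `x` to `y`. -/
def Walks (d n : ℕ) (x y : Pt d) := { w : ℕ → Pt d // IsWalk n x y w }

/-- `U_{st}(w) = -1` if `w(s) - w(t) ∈ ℕ₀ ⬝ (w(t) - w(t-1))`, and `0` otherwise. -/
def U {d : ℕ} (w : ℕ → Pt d) (s t : ℕ) : ℝ :=
  if ∃ m : ℕ, w s - w t = (m : ℤ) • (w t - w (t - 1)) then -1 else 0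

/-- `φ^λ(w) = ∏_{0 ≤ s < t ≤ n} (1 + λ U_{st}(w))` for an `n`-step walk `w`. -/
def phi {d : ℕ} (lam : ℝ) (n : ℕ) (w : ℕ → Pt d) : ℝ :=
  ∏ t ∈ Finset.range (n + 1), ∏ s ∈ Finset.range t, (1 + lam * U w s t)

/-- `c_n^λ(x,y)`. -/
def cps (d : ℕ) (lam : ℝ) (n : ℕ) (x y : Pt d) : ℝ :=
  ∑' w : Walks d n x y, phi lam n w.1

/-- `c_n^λ = Σ_x c_n^λ(0,x)`. -/
def cTot (d : ℕ) (lam : ℝ) (n : ℕ) : ℝ := ∑' x : Pt d, cps d lam n 0 x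

/-- The two-point function `G_z^λ(x,y) ∈ [0,∞]`. -/
def G (d : ℕ) (lam z : ℝ) (x y : Pt d) : ℝ≥0∞ :=
  ∑' n : ℕ, ENNReal.ofReal (cps d lam n x y) * ENNReal.ofReal z ^ n

/-- The susceptibility `χ^λ(z) ∈ [0,∞]`. -/
def chi (d : ℕ) (lam z : ℝ) : ℝ≥0∞ := ∑' x : Pt d, G d lam z 0 x

/-- The critical point `z_c(λ)`: the radius of convergence of the susceptibility
(a power series with nonnegative coefficients). -/
def zc (d : ℕ) (lam : ℝ) : ℝ := sSup { z : ℝ | 0 ≤ z ∧ chi d lam z < ⊤ }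

/-- `x ⊥ a` : `x` and `a` differ in at most one coordinate. -/
def Perp {d : ℕ} (x a : Pt d) : Prop := ∃ i : Fin d, ∀ j, j ≠ i → x j = a j

/-- The modified indicator `1_⊥`, with values in `[0,∞]`. -/
def indPerp (d : ℕ) (x : Pt d) : ℝ≥0∞ :=
  if Perp x 0 ∧ x ≠ 0 then ((d : ℝ≥0∞))⁻¹ else 0

/-- The modified indicator `1_⊥`, real-valued. -/
def indPerpReal (d : ℕ) (x : Pt d) : ℝ :=
  if Perp x 0 ∧ x ≠ 0 then (d : ℝ)⁻¹ else 0

/-- The prudent bubble diagram `B_z^λ ∈ [0,∞]`. -/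
def bubble (d : ℕ) (lam z : ℝ) : ℝ≥0∞ :=
  ⨆ y : Pt d, ∑' x₁ : Pt d, ∑' x₂ : Pt d,
    G d lam z 0 x₁ * G d lam z x₁ x₂ * indPerp d (x₂ - y)

/-- `k ⬝ x` for `k ∈ ℝ^d`, `x ∈ ℤ^d`. -/
def dotR {d : ℕ} (k : Fin d → ℝ) (x : Pt d) : ℝ := ∑ i, k i * (x i : ℝ)

/-- The Fourier transform `ĉ_n^λ(k)`. -/
def chat (d : ℕ) (lam : ℝ) (n : ℕ) (k : Fin d → ℝ) : ℂ :=
  ∑' x : Pt d, (cps d lam n 0 x : ℂ) * Complex.exp (Complex.I * (dotR k x : ℂ))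

/-! ### Laces -/

/-- `e` is an edge on the integer interval `[a,b]`. -/
def IsEdgeOn (a b : ℕ) (e : ℕ × ℕ) : Prop := a ≤ e.1 ∧ e.1 < e.2 ∧ e.2 ≤ b

/-- `Γ` is a connected graph on `[a,b]`. -/
def IsConnGraph (a b : ℕ) (Γ : Finset (ℕ × ℕ)) : Prop :=
  (∀ e ∈ Γ, IsEdgeOn a b e) ∧ (∃ e ∈ Γ, e.1 = a) ∧ (∃ e ∈ Γ, e.2 = b) ∧
    ∀ c : ℕ, a < c → c < b → ∃ e ∈ Γ, e.1 < c ∧ c < e.2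

/-- `L` is a lace on `[a,b]`: a minimally connected graph. -/
def IsLace (a b : ℕ) (L : Finset (ℕ × ℕ)) : Prop :=
  IsConnGraph a b L ∧ ∀ e ∈ L, ¬ IsConnGraph a b (L.erase e)

/-- The sequence `t₁, t₂, …` of the lace construction:
`t₁ = max{t : at ∈ Γ}`, `t_{i+1} = max{t : st ∈ Γ, s < t_i}`. -/
def tSeq (a : ℕ) (Γ : Finset (ℕ × ℕ)) : ℕ → ℕ
  | 0 => (Γ.filter fun e => e.1 = a).sup Prod.snd
  | (i + 1) => (Γ.filter fun e => e.1 < tSeq a Γ i).sup Prod.snd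

/-- `s_i = min{s : s t_i ∈ Γ}` of the lace construction. -/
def sOf (Γ : Finset (ℕ × ℕ)) (t : ℕ) : ℕ := sInf { s : ℕ | (s, t) ∈ Γ }

/-- The lace `𝓛_Γ` associated with a connected graph `Γ` on `[a,b]`. -/
def laceOf (a : ℕ) (Γ : Finset (ℕ × ℕ)) : Finset (ℕ × ℕ) :=
  (Finset.range (Γ.card + 1)).image fun i => (sOf Γ (tSeq a Γ i), tSeq a Γ i)

/-- The set `𝒞(L)` of edges on `[a,b]` compatible with the lace `L`. -/
def compat (a b : ℕ) (L : Finset (ℕ × ℕ)) : Finset (ℕ × ℕ) :=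
  (Finset.range (b + 1) ×ˢ Finset.range (b + 1)).filter fun e =>
    IsEdgeOn a b e ∧ e ∉ L ∧ laceOf a (insert e L) = L

/-- The set `𝓛_N[a,b]` of laces on `[a,b]` with exactly `N` edges. -/
def lacesN (a b N : ℕ) : Finset (Finset (ℕ × ℕ)) :=
  ((Finset.range (b + 1) ×ˢ Finset.range (b + 1)).powerset).filter fun L =>
    IsLace a b L ∧ L.card = N

/-- `∏_{st ∈ L} (-λ U_{st}(w)) ∏_{s't' ∈ 𝒞(L)} (1 + λ U_{s't'}(w))` for walks on `[0,n]`. -/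
def laceProd {d : ℕ} (lam : ℝ) (n : ℕ) (L : Finset (ℕ × ℕ)) (w : ℕ → Pt d) : ℝ :=
  (∏ e ∈ L, (-(lam * U w e.1 e.2))) * ∏ e ∈ compat 0 n L, (1 + lam * U w e.1 e.2)

/-- The lace-expansion coefficient `π_n^{(N)}(x)`. -/
def piN (d : ℕ) (lam : ℝ) (N n : ℕ) (x : Pt d) : ℝ :=
  lam ^ N * ∑' w : Walks d n 0 x, ∑ L ∈ lacesN 0 n N,
    (∏ e ∈ L, (-U w.1 e.1 e.2)) * ∏ e ∈ compat 0 n L, (1 + lam * U w.1 e.1 e.2)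

/-- The lace-expansion coefficient `π_n(x) = Σ_{N=1}^n (-1)^N π_n^{(N)}(x)`. -/
def piCoef (d : ℕ) (lam : ℝ) (n : ℕ) (x : Pt d) : ℝ :=
  ∑ N ∈ Finset.Icc 1 n, (-1 : ℝ) ^ N * piN d lam N n x

/-- `Π_z^{(N)}(x) = Σ_{n ≥ 1} z^n Σ_w Σ_L (…) ∈ [0,∞]` (all summands nonnegative). -/
def PiN (d : ℕ) (lam z : ℝ) (N : ℕ) (x : Pt d) : ℝ≥0∞ :=
  ∑' n : ℕ, ENNReal.ofReal (z ^ (n + 1)) *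
    ∑' w : Walks d (n + 1) 0 x, ∑ L ∈ lacesN 0 (n + 1) N,
      ENNReal.ofReal (laceProd lam (n + 1) L w.1)

/-- `Π_z^λ(x) = Σ_{N ≥ 1} (-1)^N Π_z^{(N)}(x)`. -/
def PiR (d : ℕ) (lam z : ℝ) (x : Pt d) : ℝ :=
  ∑' N : ℕ, (-1 : ℝ) ^ (N + 1) * (PiN d lam z (N + 1) x).toReal

/-! ### Analytic objects -/

/-- `Y_{z,k}^λ(x) = (1 - cos (k⬝x)) G_z^λ(x) ∈ [0,∞]`. -/
def Y (d : ℕ) (lam z : ℝ) (k : Fin d → ℝ) (x : Pt d) : ℝ≥0∞ :=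
  ENNReal.ofReal (1 - Real.cos (dotR k x)) * G d lam z 0 x

/-- Convolution of `[0,∞]`-valued functions on `ℤ^d`. -/
def econv {d : ℕ} (f g : Pt d → ℝ≥0∞) (x : Pt d) : ℝ≥0∞ := ∑' y : Pt d, f y * g (x - y)

/-- Sup-norm of a `[0,∞]`-valued function on `ℤ^d`. -/
def esup {d : ℕ} (f : Pt d → ℝ≥0∞) : ℝ≥0∞ := ⨆ x : Pt d, f x

/-- `D̂(k) = (1/d) Σ_i cos k_i`. -/
def Dhat (d : ℕ) (k : Fin d → ℝ) : ℝ := (1 / d) * ∑ i, Real.cos (k i)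

/-- The step distribution `D` of simple random walk. -/
def Dker (d : ℕ) (x : Pt d) : ℝ := if norm1 x = 1 then 1 / (2 * d) else 0

/-- `n`-fold convolution `D^{*n}`. -/
def Dn (d : ℕ) : ℕ → Pt d → ℝ
  | 0 => fun x => if x = 0 then 1 else 0
  | (n + 1) => fun x => ∑' y : Pt d, Dn d n y * Dker d (x - y)

/-- The function `𝒩_{a,b}(x)`, with values in `[0,∞]`. -/
def Nfun (d : ℕ) (a b x : Pt d) : ℝ≥0∞ :=
  if Perp a b ∧ a ≠ b ∧ norm1 (x - a) = 1 ∧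
      (∃ θ : ℝ, 0 ≤ θ ∧ θ ≤ 1 ∧ ∀ i, (x i : ℝ) = (a i : ℝ) + θ * ((b i : ℝ) - (a i : ℝ)))
    then ((d : ℝ≥0∞))⁻¹ else 0

/-- Helper padding a finite tuple of lattice points by `0`. -/
def padFn {d m : ℕ} (f : Fin m → Pt d) (j : ℕ) : Pt d :=
  if h : j < m then f ⟨j, h⟩ else 0

/-- The regularized indicator `1_{⊥,R}`. -/
def indPerpR (d : ℕ) (R : ℝ) (x : Pt d) : ℝ :=
  if Perp x 0 ∧ x ≠ 0 then (d : ℝ)⁻¹ * Real.exp (-(norm2sq x) / R) else 0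

/-- `1*_{⊥,R} = 1_{⊥,R} + δ₀`. -/
def indPerpRstar (d : ℕ) (R : ℝ) (x : Pt d) : ℝ :=
  indPerpR d R x + (if x = 0 then 1 else 0)

/-- `G_z^λ(x)` as a real number (for `z < z_c` the series is finite). -/
def Greal (d : ℕ) (lam z : ℝ) (x : Pt d) : ℝ := (G d lam z 0 x).toReal

/-- `χ^λ(z)` as a real number. -/
def chiR (d : ℕ) (lam z : ℝ) : ℝ := ∑' x : Pt d, Greal d lam z x

/-- `p(z) ∈ [0, 1/(2d))` defined by `1/(1 - 2 d p(z)) = χ^λ(z)`. -/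
def pz (d : ℕ) (lam z : ℝ) : ℝ := (chiR d lam z - 1) / (2 * d * chiR d lam z)

/-- `Ĉ_p(k) = 1 / (1 - 2 d p D̂(k))`. -/
def Chat (d : ℕ) (p : ℝ) (k : Fin d → ℝ) : ℝ := 1 / (1 - 2 * d * p * Dhat d k)

/-- The Fourier transform `Ĝ_z^λ(k)`. -/
def Ghat (d : ℕ) (lam z : ℝ) (k : Fin d → ℝ) : ℂ :=
  ∑' x : Pt d, (Greal d lam z x : ℂ) * Complex.exp (Complex.I * (dotR k x : ℂ))

/-- `U_{p}(k,ℓ)`. -/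
def Ubb (d : ℕ) (p : ℝ) (k l : Fin d → ℝ) : ℝ :=
  (Chat d p k)⁻¹ * (Chat d p (l - k) * Chat d p l + Chat d p (k + l) * Chat d p l
    + Chat d p (l - k) * Chat d p (k + l))

/-- `k ∈ [-π,π]^d`. -/
def inBox (d : ℕ) (k : Fin d → ℝ) : Prop := ∀ i, |k i| ≤ Real.pi

/-- `f₁(z) = 2 d z`. -/
def f1 (d : ℕ) (z : ℝ) : ℝ := 2 * d * z

/-- `f₂(z) = sup_k |Ĝ_z(k)| / Ĉ_{p(z)}(k)`. -/
def f2 (d : ℕ) (lam z : ℝ) : ℝ :=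
  sSup { r : ℝ | ∃ k : Fin d → ℝ, inBox d k ∧
    r = ‖Ghat d lam z k‖ / Chat d (pz d lam z) k }

/-- `f₃(z) = sup_{k,ℓ} |Δ_k Ĝ_z(ℓ)| / (2 U_{p(z)}(k,ℓ))`. -/
def f3 (d : ℕ) (lam z : ℝ) : ℝ :=
  sSup { r : ℝ | ∃ k l : Fin d → ℝ, inBox d k ∧ inBox d l ∧
    r = ‖Ghat d lam z (l + k) + Ghat d lam z (l - k) - 2 * Ghat d lam z l‖
      / (2 * Ubb d (pz d lam z) k l) }

/-- The bootstrap function `f(z) = max{f₁, f₂, f₃}`. -/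
def fB (d : ℕ) (lam z : ℝ) : ℝ := max (f1 d z) (max (f2 d lam z) (f3 d lam z))

/-- The Fourier transform `Π̂_z(k)` of the lace-expansion function. -/
def Pihat (d : ℕ) (lam z : ℝ) (k : Fin d → ℝ) : ℂ :=
  ∑' p : Pt d × ℕ, ((piCoef d lam (p.2 + 1) p.1 * z ^ (p.2 + 1) : ℝ) : ℂ)
    * Complex.exp (Complex.I * (dotR k p.1 : ℂ))

end PrudentWalk

/-!
Write `K[a,b] = ∏_{a ≤ s < t ≤ b} (1 + λ U_{st})`, so that `φ^λ(w) = K[0,n]`. Expanding the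
product as a sum over graphs on `[0,n]`, the graphs without an edge at `0` give `K[1,n]`; the
others are sorted by their first cut point `m`, before which the graph is connected and after
which it is arbitrary, and so give `J[0,m] K[m,n]`, where `J[0,m]` sums `∏ λ U_{st}` over the
connected graphs on `[0,m]`. A connected graph `Γ` has lace `L` exactly when `L ⊆ Γ` and every
edge of `Γ \ L` is compatible with `L`, so summing over `Γ` with a fixed lace produces the factor
`∏_{𝒞(L)} (1 + λ U)`, and `J[0,m]` becomes the alternating sum over laces that defines `π_m`.
Finally, `K[m,n]` only depends on the walk after time `m` and `J[0,m]` only before it, so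
splitting the walks at time `1`, resp. `m`, factorises the sums over walks.
-/

namespace PrudentWalk

section Graphs

variable {a b m : ℕ} {Γ Γ₁ Γ₂ : Finset (ℕ × ℕ)}

def edgesOn (a b : ℕ) : Finset (ℕ × ℕ) :=
  (Finset.range (b + 1) ×ˢ Finset.range (b + 1)).filter (IsEdgeOn a b)

@[simp] lemma mem_edgesOn {e : ℕ × ℕ} : e ∈ edgesOn a b ↔ a ≤ e.1 ∧ e.1 < e.2 ∧ e.2 ≤ b := by
  simp only [edgesOn, Finset.mem_filter, Finset.mem_product, Finset.mem_range, IsEdgeOn]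
  omega

lemma disjoint_edgesOn : Disjoint (edgesOn a m) (edgesOn m b) :=
  Finset.disjoint_left.2 fun e h₁ h₂ => by
    have := mem_edgesOn.1 h₁; have := mem_edgesOn.1 h₂; omega

def connGraphs (a b : ℕ) : Finset (Finset (ℕ × ℕ)) :=
  (edgesOn a b).powerset.filter (IsConnGraph a b)

lemma IsConnGraph.subset_edgesOn (h : IsConnGraph a b Γ) : Γ ⊆ edgesOn a b :=
  fun e he => mem_edgesOn.2 (h.1 e he)

lemma mem_connGraphs : Γ ∈ connGraphs a b ↔ IsConnGraph a b Γ := by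
  simp only [connGraphs, Finset.mem_filter, Finset.mem_powerset]
  exact ⟨And.right, fun h => ⟨h.subset_edgesOn, h⟩⟩

lemma IsConnGraph.of_subset (h : IsConnGraph a b Γ₁) (hsub : Γ₁ ⊆ Γ₂)
    (h₂ : ∀ e ∈ Γ₂, IsEdgeOn a b e) : IsConnGraph a b Γ₂ := by
  obtain ⟨-, ⟨e₁, he₁, h₁⟩, ⟨e₂, he₂, h₂'⟩, hcov⟩ := h
  exact ⟨h₂, ⟨e₁, hsub he₁, h₁⟩, ⟨e₂, hsub he₂, h₂'⟩,
    fun c hc₁ hc₂ => (hcov c hc₁ hc₂).imp fun e he => ⟨hsub he.1, he.2⟩⟩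

def IsCut (a : ℕ) (Γ : Finset (ℕ × ℕ)) (c : ℕ) : Prop :=
  a < c ∧ ∀ e ∈ Γ, ¬(e.1 < c ∧ c < e.2)

def firstCut (a : ℕ) (Γ : Finset (ℕ × ℕ)) : ℕ := sInf {c | IsCut a Γ c}

lemma isCut_right (hab : a < b) (hΓ : Γ ⊆ edgesOn a b) : IsCut a Γ b :=
  ⟨hab, fun e he h => by have := mem_edgesOn.1 (hΓ he); omega⟩

lemma isCut_firstCut {c : ℕ} (hc : IsCut a Γ c) : IsCut a Γ (firstCut a Γ) :=
  Nat.sInf_mem (s := {c | IsCut a Γ c}) ⟨c, hc⟩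

lemma firstCut_le {c : ℕ} (hc : IsCut a Γ c) : firstCut a Γ ≤ c := Nat.sInf_le hc

lemma exists_cover_of_lt_firstCut {c : ℕ} (h₁ : a < c) (h₂ : c < firstCut a Γ) :
    ∃ e ∈ Γ, e.1 < c ∧ c < e.2 := by
  by_contra! h
  exact absurd (firstCut_le ⟨h₁, fun e he hc => (h e he hc.1).not_gt hc.2⟩) (by omega)

lemma isConnGraph_filter_firstCut (hab : a < b) (hΓ : Γ ⊆ edgesOn a b)
    (h₀ : ∃ e ∈ Γ, e.1 = a) :
    IsConnGraph a (firstCut a Γ) (Γ.filter (·.2 ≤ firstCut a Γ)) := by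
  set m := firstCut a Γ
  obtain ⟨ham, hcut⟩ := isCut_firstCut (isCut_right hab hΓ)
  have hedge : ∀ e ∈ Γ, e.1 < e.2 := fun e he => (mem_edgesOn.1 (hΓ he)).2.1
  have hle : ∀ e ∈ Γ, e.1 < m → e.2 ≤ m := fun e he _ => by
    have := hcut e he; omega
  obtain ⟨e₀, he₀, he₀a⟩ := h₀
  refine ⟨fun e he => ?_, ⟨e₀, ?_, he₀a⟩, ?_, fun c hc₁ hc₂ => ?_⟩
  · obtain ⟨heΓ, he₂⟩ := Finset.mem_filter.1 he
    exact ⟨(mem_edgesOn.1 (hΓ heΓ)).1, hedge e heΓ, he₂⟩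
  · exact Finset.mem_filter.2 ⟨he₀, hle e₀ he₀ (by omega)⟩
  · rcases Nat.lt_or_ge (a + 1) m with h | h
    · obtain ⟨e, he, h₁, h₂⟩ :=
        exists_cover_of_lt_firstCut (a := a) (Γ := Γ) (c := m - 1) (by omega) (by omega)
      exact ⟨e, Finset.mem_filter.2 ⟨he, hle e he (by omega)⟩, by have := hle e he; omega⟩
    · have := hle e₀ he₀ (by omega)
      have := hedge e₀ he₀
      exact ⟨e₀, Finset.mem_filter.2 ⟨he₀, by omega⟩, by omega⟩
  · obtain ⟨e, he, h₁, h₂⟩ := exists_cover_of_lt_firstCut (Γ := Γ) hc₁ hc₂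
    exact ⟨e, Finset.mem_filter.2 ⟨he, hle e he (by omega)⟩, h₁, h₂⟩

lemma firstCut_union (h₁ : IsConnGraph a m Γ₁) (h₂ : ∀ e ∈ Γ₂, m ≤ e.1) :
    firstCut a (Γ₁ ∪ Γ₂) = m := by
  obtain ⟨e₀, he₀, he₀a⟩ := h₁.2.1
  have ham : a < m := by obtain ⟨-, h, h'⟩ := h₁.1 e₀ he₀; omega
  have hm : IsCut a (Γ₁ ∪ Γ₂) m := ⟨ham, fun e he hc => by
    rcases Finset.mem_union.1 he with h | h
    · have := (h₁.1 e h).2.2; omega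
    · have := h₂ e h; omega⟩
  refine le_antisymm (firstCut_le hm) (not_lt.1 fun hlt => ?_)
  obtain ⟨hc₁, hc₂⟩ := isCut_firstCut hm
  obtain ⟨e, he, h₁', h₂'⟩ := h₁.2.2.2 _ hc₁ hlt
  exact hc₂ e (Finset.mem_union_left _ he) ⟨h₁', h₂'⟩

lemma filter_union_edgesOn (h₁ : Γ₁ ⊆ edgesOn a m) (h₂ : Γ₂ ⊆ edgesOn m b) :
    (Γ₁ ∪ Γ₂).filter (·.2 ≤ m) = Γ₁ ∧ (Γ₁ ∪ Γ₂).filter (m ≤ ·.1) = Γ₂ := by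
  have e₁ : ∀ e ∈ Γ₁, e.1 < m ∧ e.2 ≤ m := fun e he => by
    have := mem_edgesOn.1 (h₁ he); omega
  have e₂ : ∀ e ∈ Γ₂, m ≤ e.1 ∧ m < e.2 := fun e he => by
    have := mem_edgesOn.1 (h₂ he); omega
  rw [Finset.filter_union, Finset.filter_union,
    Finset.filter_true_of_mem fun e he => (e₁ e he).2,
    Finset.filter_false_of_mem fun e he => not_le.2 (e₂ e he).2,
    Finset.filter_false_of_mem fun e he => not_le.2 (e₁ e he).1,
    Finset.filter_true_of_mem fun e he => (e₂ e he).1]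
  simp

lemma filter_powerset_edgesOn_not_start :
    (edgesOn a b).powerset.filter (fun Γ => ¬∃ e ∈ Γ, e.1 = a) =
      (edgesOn (a + 1) b).powerset := by
  ext Γ
  simp only [Finset.mem_filter, Finset.mem_powerset, Finset.subset_iff, mem_edgesOn]
  constructor
  · rintro ⟨h, h'⟩ e he
    have := h he
    have : e.1 ≠ a := fun h₂ => h' ⟨e, he, h₂⟩
    omega
  · intro h
    exact ⟨fun e he => by have := h he; omega, fun ⟨e, he, h₂⟩ => by have := h he; omega⟩

lemma filter_firstCut_eq_image (hm : m ∈ Finset.Ioc a b) :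
    (edgesOn a b).powerset.filter (fun Γ => (∃ e ∈ Γ, e.1 = a) ∧ firstCut a Γ = m) =
      (connGraphs a m ×ˢ (edgesOn m b).powerset).image fun p => p.1 ∪ p.2 := by
  obtain ⟨ham, hmb⟩ := Finset.mem_Ioc.1 hm
  ext Γ
  simp only [Finset.mem_filter, Finset.mem_powerset, Finset.mem_image, Finset.mem_product,
    mem_connGraphs]
  constructor
  · rintro ⟨hΓ, h₀, rfl⟩
    have hcut := (isCut_firstCut (isCut_right (by omega) hΓ)).2
    refine ⟨(_, _), ⟨isConnGraph_filter_firstCut (by omega) hΓ h₀, fun e he => ?_⟩,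
      Finset.filter_union_filter_not_eq _ _⟩
    obtain ⟨heΓ, h⟩ := Finset.mem_filter.1 he
    have := hcut e heΓ
    have := mem_edgesOn.1 (hΓ heΓ)
    exact mem_edgesOn.2 (by omega)
  · rintro ⟨⟨Γ₁, Γ₂⟩, ⟨h₁, h₂⟩, rfl⟩
    refine ⟨Finset.union_subset (fun e he => ?_) (fun e he => ?_), ?_, firstCut_union h₁ ?_⟩
    · obtain ⟨h, h', h''⟩ := h₁.1 e he
      exact mem_edgesOn.2 (by omega)
    · have := mem_edgesOn.1 (h₂ he)
      exact mem_edgesOn.2 (by omega)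
    · obtain ⟨e, he, hea⟩ := h₁.2.1
      exact ⟨e, Finset.mem_union_left _ he, hea⟩
    · exact fun e he => (mem_edgesOn.1 (h₂ he)).1

lemma sum_filter_firstCut {R : Type*} [CommSemiring R] (hm : m ∈ Finset.Ioc a b)
    (u : ℕ × ℕ → R) :
    ∑ Γ ∈ (edgesOn a b).powerset.filter (fun Γ => (∃ e ∈ Γ, e.1 = a) ∧ firstCut a Γ = m),
        ∏ e ∈ Γ, u e =
      (∑ Γ ∈ connGraphs a m, ∏ e ∈ Γ, u e) * ∏ e ∈ edgesOn m b, (1 + u e) := by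
  have hsub : ∀ p ∈ connGraphs a m ×ˢ (edgesOn m b).powerset,
      p.1 ⊆ edgesOn a m ∧ p.2 ⊆ edgesOn m b := fun p hp => by
    obtain ⟨h₁, h₂⟩ := Finset.mem_product.1 hp
    exact ⟨(mem_connGraphs.1 h₁).subset_edgesOn, Finset.mem_powerset.1 h₂⟩
  rw [filter_firstCut_eq_image hm, Finset.sum_image, Finset.prod_one_add, Finset.sum_mul_sum,
    ← Finset.sum_product']
  · refine Finset.sum_congr rfl fun p hp => Finset.prod_union ?_
    exact disjoint_edgesOn.mono (hsub p hp).1 (hsub p hp).2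
  · intro p hp q hq hpq
    obtain ⟨hp₁, hp₂⟩ := filter_union_edgesOn (hsub p hp).1 (hsub p hp).2
    obtain ⟨hq₁, hq₂⟩ := filter_union_edgesOn (hsub q hq).1 (hsub q hq).2
    simp only at hpq
    exact Prod.ext (hp₁.symm.trans (hpq ▸ hq₁)) (hp₂.symm.trans (hpq ▸ hq₂))

theorem prod_one_add_edgesOn {R : Type*} [CommSemiring R] (hab : a < b) (u : ℕ × ℕ → R) :
    ∏ e ∈ edgesOn a b, (1 + u e) =
      ∏ e ∈ edgesOn (a + 1) b, (1 + u e) +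
        ∑ m ∈ Finset.Ioc a b,
          (∑ Γ ∈ connGraphs a m, ∏ e ∈ Γ, u e) * ∏ e ∈ edgesOn m b, (1 + u e) := by
  have hcut : ∀ Γ ∈ (edgesOn a b).powerset.filter (fun Γ => ∃ e ∈ Γ, e.1 = a),
      firstCut a Γ ∈ Finset.Ioc a b := fun Γ hΓ => by
    have hcut := isCut_right hab (Finset.mem_powerset.1 (Finset.mem_filter.1 hΓ).1)
    exact Finset.mem_Ioc.2 ⟨(isCut_firstCut hcut).1, firstCut_le hcut⟩
  rw [Finset.prod_one_add, Finset.prod_one_add,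
    ← Finset.sum_filter_not_add_sum_filter _ (fun Γ => ∃ e ∈ Γ, e.1 = a),
    filter_powerset_edgesOn_not_start, ← Finset.sum_fiberwise_of_maps_to hcut]
  refine congrArg _ (Finset.sum_congr rfl fun m hm => ?_)
  rw [Finset.filter_filter, sum_filter_firstCut hm]

end Graphs

section Laces

variable {a b : ℕ} {Γ L : Finset (ℕ × ℕ)} {e : ℕ × ℕ} {i : ℕ}

/-- The edge `s_{i+1} t_{i+1}` of the lace construction (indexed from `0`, like `tSeq`). -/
def laceEdge (a : ℕ) (Γ : Finset (ℕ × ℕ)) (i : ℕ) : ℕ × ℕ :=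
  (sOf Γ (tSeq a Γ i), tSeq a Γ i)

lemma le_tSeq_zero (he : e ∈ Γ) (h : e.1 = a) : e.2 ≤ tSeq a Γ 0 :=
  Finset.le_sup (f := Prod.snd) (Finset.mem_filter.2 ⟨he, h⟩)

lemma le_tSeq_succ (he : e ∈ Γ) (h : e.1 < tSeq a Γ i) : e.2 ≤ tSeq a Γ (i + 1) :=
  Finset.le_sup (f := Prod.snd) (Finset.mem_filter.2 ⟨he, h⟩)

lemma tSeq_zero_le {c : ℕ} (h : ∀ e ∈ Γ, e.1 = a → e.2 ≤ c) : tSeq a Γ 0 ≤ c :=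
  Finset.sup_le fun e he => h e (Finset.mem_filter.1 he).1 (Finset.mem_filter.1 he).2

lemma tSeq_succ_le {c : ℕ} (h : ∀ e ∈ Γ, e.1 < tSeq a Γ i → e.2 ≤ c) :
    tSeq a Γ (i + 1) ≤ c :=
  Finset.sup_le fun e he => h e (Finset.mem_filter.1 he).1 (Finset.mem_filter.1 he).2

lemma sOf_le {s t : ℕ} (h : (s, t) ∈ Γ) : sOf Γ t ≤ s := Nat.sInf_le h

lemma sOf_mem {s t : ℕ} (h : (s, t) ∈ Γ) : (sOf Γ t, t) ∈ Γ :=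
  Nat.sInf_mem (s := {s | (s, t) ∈ Γ}) ⟨s, h⟩

lemma sOf_eq_of_subset {t : ℕ} (hsub : L ⊆ Γ) (h : (sOf Γ t, t) ∈ L) : sOf L t = sOf Γ t :=
  le_antisymm (sOf_le h) (le_csInf ⟨_, h⟩ fun _ hs => sOf_le (hsub hs))

/-- The index of the last edge of `𝓛_Γ`. -/
def lastIdx (a b : ℕ) (Γ : Finset (ℕ × ℕ)) : ℕ := sInf {i | tSeq a Γ i = b}

namespace IsConnGraph

variable (hΓ : IsConnGraph a b Γ)
include hΓ

lemma exists_mem_tSeq (i : ℕ) :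
    ∃ s, (s, tSeq a Γ i) ∈ Γ ∧ (i = 0 → s = a) ∧ ∀ j, i = j + 1 → s < tSeq a Γ j := by
  induction i with
  | zero =>
    obtain ⟨f, hf, hfs⟩ := Finset.exists_mem_eq_sup _
      (hΓ.2.1.imp fun e he => Finset.mem_filter.2 he) Prod.snd
    obtain ⟨hfΓ, hfa⟩ := Finset.mem_filter.1 hf
    exact ⟨f.1, by rwa [tSeq, hfs], fun _ => hfa, by omega⟩
  | succ i ih =>
    obtain ⟨s, hs, -⟩ := ih
    obtain ⟨f, hf, hfs⟩ := Finset.exists_mem_eq_sup (Γ.filter fun e => e.1 < tSeq a Γ i)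
      ⟨_, Finset.mem_filter.2 ⟨hs, (hΓ.1 _ hs).2.1⟩⟩ Prod.snd
    obtain ⟨hfΓ, hft⟩ := Finset.mem_filter.1 hf
    exact ⟨f.1, by rwa [tSeq, hfs], by omega, fun j hj => by cases hj; exact hft⟩

lemma laceEdge_mem (i : ℕ) : laceEdge a Γ i ∈ Γ :=
  sOf_mem (hΓ.exists_mem_tSeq i).choose_spec.1

lemma sOf_tSeq_zero : sOf Γ (tSeq a Γ 0) = a := by
  obtain ⟨s, hs, h0, -⟩ := hΓ.exists_mem_tSeq 0
  obtain rfl := h0 rfl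
  exact le_antisymm (sOf_le hs) (hΓ.1 _ (hΓ.laceEdge_mem 0)).1

lemma sOf_tSeq_succ_lt (i : ℕ) : sOf Γ (tSeq a Γ (i + 1)) < tSeq a Γ i := by
  obtain ⟨s, hs, -, hlt⟩ := hΓ.exists_mem_tSeq (i + 1)
  exact (sOf_le hs).trans_lt (hlt i rfl)

lemma lt_tSeq (i : ℕ) : a < tSeq a Γ i := by
  obtain ⟨h₁, h₂, -⟩ := hΓ.1 _ (hΓ.laceEdge_mem i)
  exact h₁.trans_lt h₂

lemma tSeq_le (i : ℕ) : tSeq a Γ i ≤ b := (hΓ.1 _ (hΓ.laceEdge_mem i)).2.2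

lemma tSeq_monotone : Monotone (tSeq a Γ) :=
  monotone_nat_of_le_succ fun i => le_tSeq_succ (hΓ.laceEdge_mem i) (hΓ.1 _ (hΓ.laceEdge_mem i)).2.1

lemma tSeq_lt_succ (h : tSeq a Γ i < b) : tSeq a Γ i < tSeq a Γ (i + 1) := by
  obtain ⟨e, he, h₁, h₂⟩ := hΓ.2.2.2 _ (hΓ.lt_tSeq i) h
  exact h₂.trans_le (le_tSeq_succ he h₁)

lemma tSeq_le_sOf (h : tSeq a Γ (i + 1) < b) : tSeq a Γ i ≤ sOf Γ (tSeq a Γ (i + 2)) := by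
  by_contra! hlt
  have : tSeq a Γ (i + 2) ≤ tSeq a Γ (i + 1) := le_tSeq_succ (hΓ.laceEdge_mem (i + 2)) hlt
  have : tSeq a Γ (i + 1) < tSeq a Γ (i + 2) := hΓ.tSeq_lt_succ h
  omega

lemma min_le_tSeq (i : ℕ) : min b (a + 1 + i) ≤ tSeq a Γ i := by
  induction i with
  | zero => have := hΓ.lt_tSeq 0; omega
  | succ i ih =>
    have := hΓ.tSeq_monotone (Nat.le_add_right i 1)
    rcases (hΓ.tSeq_le i).lt_or_eq with h | h
    · have := hΓ.tSeq_lt_succ h; omega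
    · omega

lemma tSeq_sub_sub_one_eq : tSeq a Γ (b - a - 1) = b := by
  have := hΓ.min_le_tSeq (b - a - 1)
  have := hΓ.tSeq_le (b - a - 1)
  have := hΓ.lt_tSeq 0
  have := hΓ.tSeq_le 0
  omega

lemma tSeq_lastIdx : tSeq a Γ (lastIdx a b Γ) = b :=
  Nat.sInf_mem (s := {i | tSeq a Γ i = b}) ⟨_, hΓ.tSeq_sub_sub_one_eq⟩

lemma lastIdx_lt : lastIdx a b Γ < b - a := by
  have := Nat.sInf_le (s := {i | tSeq a Γ i = b}) hΓ.tSeq_sub_sub_one_eq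
  have := hΓ.lt_tSeq 0
  have := hΓ.tSeq_le 0
  unfold lastIdx
  omega

lemma tSeq_lt_of_lt_lastIdx (h : i < lastIdx a b Γ) : tSeq a Γ i < b :=
  (hΓ.tSeq_le i).lt_of_ne fun hi => (Nat.sInf_le (s := {i | tSeq a Γ i = b}) hi).not_gt h

lemma tSeq_of_lastIdx_le (h : lastIdx a b Γ ≤ i) : tSeq a Γ i = b :=
  le_antisymm (hΓ.tSeq_le i) (hΓ.tSeq_lastIdx ▸ hΓ.tSeq_monotone h)

lemma tSeq_strictMonoOn : StrictMonoOn (tSeq a Γ) (Set.Iic (lastIdx a b Γ)) :=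
  strictMonoOn_Iic_of_lt_succ fun _ h => hΓ.tSeq_lt_succ (hΓ.tSeq_lt_of_lt_lastIdx h)

lemma lastIdx_lt_card : lastIdx a b Γ < Γ.card := by
  have hinj : Set.InjOn (laceEdge a Γ) (Finset.range (lastIdx a b Γ + 1)) := fun i hi j hj h =>
    hΓ.tSeq_strictMonoOn.injOn (by simpa [Nat.lt_succ_iff] using hi)
      (by simpa [Nat.lt_succ_iff] using hj) (congrArg Prod.snd h)
  have := Finset.card_le_card_of_injOn _ (fun i _ => hΓ.laceEdge_mem i) hinj
  simpa using this

lemma laceEdge_eq_min (i : ℕ) : laceEdge a Γ i = laceEdge a Γ (min i (lastIdx a b Γ)) := by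
  rcases le_total i (lastIdx a b Γ) with h | h
  · rw [min_eq_left h]
  · simp only [laceEdge, min_eq_right h, hΓ.tSeq_lastIdx, hΓ.tSeq_of_lastIdx_le h]

lemma mem_laceOf_iff_le : e ∈ laceOf a Γ ↔ ∃ i ≤ lastIdx a b Γ, laceEdge a Γ i = e := by
  simp only [laceOf, Finset.mem_image, Finset.mem_range]
  constructor
  · rintro ⟨i, -, rfl⟩
    exact ⟨_, min_le_right _ _, (hΓ.laceEdge_eq_min i).symm⟩
  · rintro ⟨i, hi, rfl⟩
    exact ⟨i, by have := hΓ.lastIdx_lt_card; omega, rfl⟩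

lemma laceEdge_mem_laceOf (i : ℕ) : laceEdge a Γ i ∈ laceOf a Γ :=
  hΓ.mem_laceOf_iff_le.2 ⟨_, min_le_right _ _, (hΓ.laceEdge_eq_min i).symm⟩

lemma mem_laceOf_iff : e ∈ laceOf a Γ ↔ ∃ i, laceEdge a Γ i = e :=
  ⟨fun he => (hΓ.mem_laceOf_iff_le.1 he).imp fun _ h => h.2,
    fun ⟨i, hi⟩ => hi ▸ hΓ.laceEdge_mem_laceOf i⟩

lemma laceOf_subset : laceOf a Γ ⊆ Γ := fun _ he => by
  obtain ⟨i, -, rfl⟩ := hΓ.mem_laceOf_iff_le.1 he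
  exact hΓ.laceEdge_mem i

lemma card_laceOf_le : (laceOf a Γ).card ≤ b - a := by
  have hsub : laceOf a Γ ⊆ (Finset.range (lastIdx a b Γ + 1)).image (laceEdge a Γ) :=
    fun _ he => by
      obtain ⟨i, hi, rfl⟩ := hΓ.mem_laceOf_iff_le.1 he
      exact Finset.mem_image_of_mem _ (Finset.mem_range.2 (Nat.lt_succ_of_le hi))
  have := (Finset.card_le_card hsub).trans Finset.card_image_le
  have := hΓ.lastIdx_lt
  simp only [Finset.card_range] at *
  omega

lemma isConnGraph_laceOf : IsConnGraph a b (laceOf a Γ) := by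
  refine ⟨fun e he => hΓ.1 e (hΓ.laceOf_subset he),
    ⟨_, hΓ.laceEdge_mem_laceOf 0, hΓ.sOf_tSeq_zero⟩,
    ⟨_, hΓ.laceEdge_mem_laceOf _, hΓ.tSeq_lastIdx⟩, fun c hc₁ hc₂ => ?_⟩
  have hex : ∃ i, c < tSeq a Γ i := ⟨_, hΓ.tSeq_lastIdx ▸ hc₂⟩
  refine ⟨_, hΓ.laceEdge_mem_laceOf (Nat.find hex), ?_, Nat.find_spec hex⟩
  rcases hi : Nat.find hex with _ | i
  · simpa [laceEdge, hΓ.sOf_tSeq_zero] using hc₁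
  · have := Nat.find_min hex (show i < Nat.find hex by omega)
    have := hΓ.sOf_tSeq_succ_lt i
    simp only [laceEdge]
    omega

/-- Removing `s_i t_i` from `𝓛_Γ` uncovers `a` (if `i = 0`), `b` (if `t_i = b`), and
`t_{i-1}` otherwise. -/
lemma isLace_laceOf : IsLace a b (laceOf a Γ) := by
  refine ⟨hΓ.isConnGraph_laceOf, fun e he hconn => ?_⟩
  obtain ⟨i, hi, rfl⟩ := hΓ.mem_laceOf_iff_le.1 he
  have hrest : ∀ f ∈ (laceOf a Γ).erase (laceEdge a Γ i),
      ∃ j ≤ lastIdx a b Γ, tSeq a Γ j ≠ tSeq a Γ i ∧ laceEdge a Γ j = f := fun f hf => by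
    obtain ⟨hfi, hf⟩ := Finset.mem_erase.1 hf
    obtain ⟨j, hj, rfl⟩ := hΓ.mem_laceOf_iff_le.1 hf
    exact ⟨j, hj, fun h => hfi (by simp only [laceEdge, h]), rfl⟩
  rcases Nat.eq_zero_or_pos i with rfl | hi₀
  · obtain ⟨f, hf, hfa⟩ := hconn.2.1
    obtain ⟨j, hj, hne, rfl⟩ := hrest f hf
    have := le_tSeq_zero (hΓ.laceEdge_mem j) hfa
    have := hΓ.tSeq_monotone (Nat.zero_le j)
    simp only [laceEdge] at *
    omega
  rcases hi.lt_or_eq with hi' | rfl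
  · obtain ⟨f, hf, hf₁, hf₂⟩ := hconn.2.2.2 (tSeq a Γ (i - 1)) (hΓ.lt_tSeq _)
      ((hΓ.tSeq_strictMonoOn (show i - 1 ≤ lastIdx a b Γ by omega) hi (by omega)).trans
        (hΓ.tSeq_lt_of_lt_lastIdx hi'))
    obtain ⟨j, hj, hne, rfl⟩ := hrest f hf
    simp only [laceEdge] at hf₁ hf₂
    have hij : i < j := by
      by_contra! h
      rcases h.lt_or_eq with h | rfl
      · have := hΓ.tSeq_monotone (show j ≤ i - 1 by omega); omega
      · exact hne rfl
    have := hΓ.tSeq_le_sOf (i := j - 2)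
      (hΓ.tSeq_lt_of_lt_lastIdx (show j - 2 + 1 < lastIdx a b Γ by omega))
    have := hΓ.tSeq_monotone (show i - 1 ≤ j - 2 by omega)
    rw [show j - 2 + 2 = j by omega] at *
    omega
  · obtain ⟨f, hf, hfb⟩ := hconn.2.2.1
    obtain ⟨j, hj, hne, rfl⟩ := hrest f hf
    exact hne (hfb.trans hΓ.tSeq_lastIdx.symm)

lemma tSeq_eq_of_subset (hsub : L ⊆ Γ) (h : ∀ i, laceEdge a Γ i ∈ L) :
    tSeq a L = tSeq a Γ := by
  funext i
  induction i with
  | zero =>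
    exact le_antisymm (tSeq_zero_le fun e he => le_tSeq_zero (hsub he))
      (le_tSeq_zero (h 0) hΓ.sOf_tSeq_zero)
  | succ i ih =>
    refine le_antisymm (tSeq_succ_le fun e he hlt => le_tSeq_succ (hsub he) (ih ▸ hlt)) ?_
    exact le_tSeq_succ (h (i + 1)) (ih ▸ hΓ.sOf_tSeq_succ_lt i)

lemma tSeq_laceOf : tSeq a (laceOf a Γ) = tSeq a Γ :=
  hΓ.tSeq_eq_of_subset hΓ.laceOf_subset hΓ.laceEdge_mem_laceOf

lemma sOf_laceOf (i : ℕ) : sOf (laceOf a Γ) (tSeq a Γ i) = sOf Γ (tSeq a Γ i) :=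
  sOf_eq_of_subset hΓ.laceOf_subset (hΓ.laceEdge_mem_laceOf i)

end IsConnGraph

lemma IsLace.laceOf_eq (hL : IsLace a b L) : laceOf a L = L := by
  by_contra hne
  obtain ⟨e, heL, he⟩ := Finset.exists_of_ssubset (hL.1.laceOf_subset.ssubset_of_ne hne)
  exact hL.2 e heL (hL.1.isConnGraph_laceOf.of_subset (Finset.subset_erase.2
    ⟨hL.1.laceOf_subset, he⟩) fun f hf => hL.1.1 f (Finset.mem_erase.1 hf).2)

end Laces

section Compat

variable {a b : ℕ} {Γ L : Finset (ℕ × ℕ)} {e : ℕ × ℕ}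

/-- Explicit form of compatibility: adding `e` to `L` changes neither the `t_i` nor the `s_i`
of the lace construction. -/
def RespectsLace (a : ℕ) (L : Finset (ℕ × ℕ)) (e : ℕ × ℕ) : Prop :=
  (e.1 = a → e.2 ≤ tSeq a L 0) ∧ (∀ i, e.1 < tSeq a L i → e.2 ≤ tSeq a L (i + 1)) ∧
    ∀ i, e.2 = tSeq a L i → sOf L (tSeq a L i) ≤ e.1

lemma IsConnGraph.respectsLace_laceOf (hΓ : IsConnGraph a b Γ) (he : e ∈ Γ) :
    RespectsLace a (laceOf a Γ) e := by
  simp only [RespectsLace, hΓ.tSeq_laceOf, hΓ.sOf_laceOf]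
  refine ⟨le_tSeq_zero he, fun i => le_tSeq_succ he, fun i hi => sOf_le ?_⟩
  rwa [← hi]

lemma IsLace.respectsLace (hL : IsLace a b L) (he : e ∈ L) : RespectsLace a L e := by
  simpa only [hL.laceOf_eq] using hL.1.respectsLace_laceOf he

lemma laceOf_eq_of_respectsLace (hΓ : IsConnGraph a b Γ) (hL : IsLace a b L) (hsub : L ⊆ Γ)
    (h : ∀ e ∈ Γ, RespectsLace a L e) : laceOf a Γ = L := by
  have ht : tSeq a Γ = tSeq a L := by
    funext i
    induction i with
    | zero =>
      exact le_antisymm (tSeq_zero_le fun e he => (h e he).1)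
        (le_tSeq_zero (hsub (hL.1.laceEdge_mem 0)) hL.1.sOf_tSeq_zero)
    | succ i ih =>
      refine le_antisymm (tSeq_succ_le fun e he hlt => (h e he).2.1 i (ih ▸ hlt)) ?_
      exact le_tSeq_succ (hsub (hL.1.laceEdge_mem (i + 1))) (ih ▸ hL.1.sOf_tSeq_succ_lt i)
  have hedge : laceEdge a Γ = laceEdge a L := by
    funext i
    simp only [laceEdge, ht]
    congr 1
    exact le_antisymm (sOf_le (hsub (hL.1.laceEdge_mem i)))
      (le_csInf ⟨_, hsub (hL.1.laceEdge_mem i)⟩ fun s hs => (h _ hs).2.2 i rfl)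
  ext f
  rw [hΓ.mem_laceOf_iff, hedge, ← hL.1.mem_laceOf_iff, hL.laceOf_eq]

lemma IsLace.mem_compat_iff (hL : IsLace a b L) :
    e ∈ compat a b L ↔ IsEdgeOn a b e ∧ e ∉ L ∧ RespectsLace a L e := by
  have hconn : IsEdgeOn a b e → IsConnGraph a b (insert e L) := fun he =>
    hL.1.of_subset (Finset.subset_insert e L) fun f hf =>
      (Finset.mem_insert.1 hf).elim (· ▸ he) (hL.1.1 f)
  have hmem : e ∈ compat a b L ↔ IsEdgeOn a b e ∧ e ∉ L ∧ laceOf a (insert e L) = L := by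
    rw [compat, Finset.mem_filter, Finset.mem_product, Finset.mem_range, Finset.mem_range]
    refine ⟨And.right, fun h => ⟨?_, h⟩⟩
    obtain ⟨-, h₁, h₂⟩ := h.1
    omega
  rw [hmem]
  refine and_congr_right fun he => and_congr_right fun _ => ⟨fun h => ?_, fun h => ?_⟩
  · simpa only [h] using (hconn he).respectsLace_laceOf (Finset.mem_insert_self e L)
  · refine laceOf_eq_of_respectsLace (hconn he) hL (Finset.subset_insert e L) fun f hf => ?_
    exact (Finset.mem_insert.1 hf).elim (· ▸ h) hL.respectsLace

lemma filter_laceOf_eq_image (hL : IsLace a b L) :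
    (connGraphs a b).filter (laceOf a · = L) = (compat a b L).powerset.image (L ∪ ·) := by
  ext Γ
  simp only [Finset.mem_filter, mem_connGraphs, Finset.mem_image, Finset.mem_powerset]
  constructor
  · rintro ⟨hΓ, rfl⟩
    refine ⟨Γ \ laceOf a Γ, fun f hf => ?_, Finset.union_sdiff_of_subset hΓ.laceOf_subset⟩
    obtain ⟨hfΓ, hfL⟩ := Finset.mem_sdiff.1 hf
    exact hL.mem_compat_iff.2 ⟨hΓ.1 f hfΓ, hfL, hΓ.respectsLace_laceOf hfΓ⟩
  · rintro ⟨S, hS, rfl⟩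
    have hS' := fun f (hf : f ∈ S) => hL.mem_compat_iff.1 (hS hf)
    have hconn : IsConnGraph a b (L ∪ S) := hL.1.of_subset Finset.subset_union_left fun f hf =>
      (Finset.mem_union.1 hf).elim (hL.1.1 f) fun hf => (hS' f hf).1
    refine ⟨hconn, laceOf_eq_of_respectsLace hconn hL Finset.subset_union_left fun f hf => ?_⟩
    exact (Finset.mem_union.1 hf).elim hL.respectsLace fun hf => (hS' f hf).2.2

def laces (a b : ℕ) : Finset (Finset (ℕ × ℕ)) := (edgesOn a b).powerset.filter (IsLace a b)

lemma mem_laces : L ∈ laces a b ↔ IsLace a b L := by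
  simp only [laces, Finset.mem_filter, Finset.mem_powerset]
  exact ⟨And.right, fun h => ⟨h.1.subset_edgesOn, h⟩⟩

theorem sum_connGraphs_eq_sum_laces {R : Type*} [CommSemiring R] (u : ℕ × ℕ → R) :
    ∑ Γ ∈ connGraphs a b, ∏ e ∈ Γ, u e =
      ∑ L ∈ laces a b, (∏ e ∈ L, u e) * ∏ e ∈ compat a b L, (1 + u e) := by
  rw [← Finset.sum_fiberwise_of_maps_to (g := laceOf a) (t := laces a b)
    fun Γ hΓ => mem_laces.2 (mem_connGraphs.1 hΓ).isLace_laceOf]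
  refine Finset.sum_congr rfl fun L hL => ?_
  have hL := mem_laces.1 hL
  have hdisj : ∀ S ∈ (compat a b L).powerset, Disjoint L S := fun S hS =>
    Finset.disjoint_right.2 fun f hf => (hL.mem_compat_iff.1 (Finset.mem_powerset.1 hS hf)).2.1
  rw [filter_laceOf_eq_image hL, Finset.sum_image, Finset.prod_one_add, Finset.mul_sum]
  · exact Finset.sum_congr rfl fun S hS => Finset.prod_union (hdisj S hS)
  · intro S hS S' hS' h
    rw [← Finset.union_sdiff_cancel_left (hdisj S hS), ← Finset.union_sdiff_cancel_left
      (hdisj S' hS')]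
    exact congrArg (· \ L) h

lemma sum_laces_eq_sum_lacesN {M : Type*} [AddCommMonoid M] (f : Finset (ℕ × ℕ) → M) :
    ∑ L ∈ laces a b, f L = ∑ N ∈ Finset.Icc 1 (b - a), ∑ L ∈ lacesN a b N, f L := by
  rw [← Finset.sum_fiberwise_of_maps_to (g := Finset.card) (t := Finset.Icc 1 (b - a))]
  · refine Finset.sum_congr rfl fun N _ => Finset.sum_congr ?_ fun _ _ => rfl
    ext L
    simp only [laces, lacesN, Finset.mem_filter, Finset.mem_powerset]
    refine ⟨fun ⟨⟨_, hL⟩, hN⟩ => ⟨?_, hL, hN⟩, fun ⟨_, hL, hN⟩ => ⟨⟨hL.1.subset_edgesOn, hL⟩, hN⟩⟩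
    exact hL.1.subset_edgesOn.trans (Finset.filter_subset _ _)
  · intro L hL
    have hL := mem_laces.1 hL
    obtain ⟨e, he, -⟩ := hL.1.2.1
    exact Finset.mem_Icc.2 ⟨Finset.card_pos.2 ⟨e, he⟩, hL.laceOf_eq ▸ hL.1.card_laceOf_le⟩

end Compat

section Walks

variable {d n m : ℕ} {x y v : Pt d} {w : ℕ → Pt d}

lemma abs_apply_le_norm1 (u : Pt d) (i : Fin d) : |u i| ≤ norm1 u :=
  Finset.single_le_sum (fun j _ => abs_nonneg (u j)) (Finset.mem_univ i)

lemma IsWalk.abs_apply_sub_le (hw : IsWalk n x y w) (i : Fin d) :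
    ∀ s, |w s i - x i| ≤ (min s n : ℕ)
  | 0 => by simp [hw.1]
  | s + 1 => by
    have ih := hw.abs_apply_sub_le i s
    rcases lt_or_ge s n with h | h
    · have hstep := abs_apply_le_norm1 (w (s + 1) - w s) i
      rw [hw.2.2 s h, Pi.sub_apply] at hstep
      have := abs_sub_le (w (s + 1) i) (w s i) (x i)
      omega
    · rw [hw.2.1 (s + 1) (by omega), ← hw.2.1 s h]
      omega

instance (n : ℕ) (x y : Pt d) : Finite (Walks d n x y) := by
  let box := Fintype.piFinset fun i : Fin d => Finset.Icc (x i - n) (x i + n)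
  have hbox (w : Walks d n x y) (s : ℕ) : w.1 s ∈ box := Fintype.mem_piFinset.2 fun i => by
    have := w.2.abs_apply_sub_le i s
    rw [abs_le] at this
    exact Finset.mem_Icc.2 (by omega)
  refine Finite.of_injective (fun w (s : Fin (n + 1)) => (⟨w.1 s, hbox w s⟩ : box))
    fun w w' h => Subtype.ext (funext fun s => ?_)
  rcases le_or_gt s n with hs | hs
  · exact congrArg Subtype.val (congrFun h ⟨s, Nat.lt_succ_of_le hs⟩)
  · rw [w.2.2.1 s hs.le, w'.2.2.1 s hs.le]

noncomputable instance (n : ℕ) (x y : Pt d) : Fintype (Walks d n x y) := Fintype.ofFinite _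

lemma cps_eq_sum (lam : ℝ) (n : ℕ) (x y : Pt d) :
    cps d lam n x y = ∑ w : Walks d n x y, phi lam n w.1 :=
  tsum_fintype _

lemma IsWalk.trunc (hw : IsWalk n x y w) (hmn : m ≤ n) :
    IsWalk m x (w m) fun s => w (min s m) :=
  ⟨by simpa using hw.1, fun s hs => by dsimp only; rw [min_eq_right hs],
    fun s hs => by
      dsimp only
      rw [min_eq_left (by omega), min_eq_left hs.le]
      exact hw.2.2 s (by omega)⟩

lemma IsWalk.shift (hw : IsWalk n x y w) (m : ℕ) : IsWalk (n - m) (w m) y fun s => w (s + m) :=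
  ⟨by dsimp only; rw [zero_add], fun s hs => hw.2.1 _ (by omega),
    fun s hs => by dsimp only; rw [add_right_comm]; exact hw.2.2 _ (by omega)⟩

lemma IsWalk.append {k : ℕ} {w' : ℕ → Pt d} (hw : IsWalk m x v w) (hw' : IsWalk k v y w') :
    IsWalk (m + k) x y fun s => if s ≤ m then w s else w' (s - m) := by
  refine ⟨by simpa using hw.1, fun s hs => ?_, fun s hs => ?_⟩ <;> dsimp only
  · split_ifs with h
    · rw [hw.2.1 s (by omega), ← hw'.1, hw'.2.1 0 (by omega)]
    · exact hw'.2.1 _ (by omega)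
  · rcases lt_or_ge s m with h | h
    · simpa only [if_pos (Nat.succ_le_of_lt h), if_pos h.le] using hw.2.2 s h
    · have hs' : s + 1 - m = s - m + 1 := by omega
      have hw's : (if s ≤ m then w s else w' (s - m)) = w' (s - m) := by
        split_ifs with h'
        · rw [show s = m by omega, hw.2.1 m le_rfl, Nat.sub_self, hw'.1]
        · rfl
      rw [if_neg (by omega), hw's, hs']
      exact hw'.2.2 _ (by omega)

def walksSplitEquiv (hmn : m ≤ n) (v : Pt d) :
    {w : Walks d n x y // w.1 m = v} ≃ Walks d m x v × Walks d (n - m) v y where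
  toFun w := (⟨_, w.2 ▸ w.1.2.trunc hmn⟩, ⟨_, w.2 ▸ w.1.2.shift m⟩)
  invFun p := ⟨⟨_, Nat.add_sub_cancel' hmn ▸ p.1.2.append p.2.2⟩, by simpa using p.1.2.2.1 m le_rfl⟩
  left_inv w := by
    refine Subtype.ext (Subtype.ext (funext fun s => ?_))
    dsimp only
    split_ifs with h
    · rw [min_eq_left h]
    · rw [Nat.sub_add_cancel (by omega)]
  right_inv p := by
    refine Prod.ext (Subtype.ext (funext fun s => ?_)) (Subtype.ext (funext fun s => ?_))
    · dsimp only
      rw [if_pos (min_le_right s m)]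
      rcases le_total s m with h | h
      · rw [min_eq_left h]
      · rw [min_eq_right h, p.1.2.2.1 m le_rfl, p.1.2.2.1 s h]
    · dsimp only
      split_ifs with h
      · rw [show s = 0 by omega, zero_add, p.1.2.2.1 m le_rfl, p.2.2.1]
      · rw [Nat.add_sub_cancel]

lemma sum_walks_eq_tsum_sum_fiber (m : ℕ) (f : Walks d n x y → ℝ) :
    ∑ w, f w = ∑' v, ∑ w : {w : Walks d n x y // w.1 m = v}, f w := by
  let e := Equiv.sigmaFiberEquiv fun w : Walks d n x y => w.1 m
  calc ∑ w, f w = ∑' w, f w := (tsum_fintype f).symm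
    _ = ∑' p, f (e p) := (e.tsum_eq f).symm
    _ = ∑' v, ∑' w : {w : Walks d n x y // w.1 m = v}, f w :=
      Summable.tsum_sigma' (fun _ => Summable.of_finite)
        ((Equiv.summable_iff e).2 Summable.of_finite)
    _ = _ := tsum_congr fun v => tsum_fintype _

end Walks

section Expansion

variable {d n m : ℕ} {x y : Pt d} (lam : ℝ)

/-- `K[a,b]` of the lace expansion. -/
def K (a b : ℕ) (w : ℕ → Pt d) : ℝ := ∏ e ∈ edgesOn a b, (1 + lam * U w e.1 e.2)

/-- `J[a,b]` of the lace expansion. -/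
def J (a b : ℕ) (w : ℕ → Pt d) : ℝ := ∑ Γ ∈ connGraphs a b, ∏ e ∈ Γ, lam * U w e.1 e.2

lemma phi_eq_K (w : ℕ → Pt d) : phi lam n w = K lam 0 n w :=
  (Finset.prod_finset_product_right' _ _ _ fun e => by
    simp only [mem_edgesOn, Finset.mem_range]; omega).symm

lemma U_eq_of_eqOn {a b : ℕ} {w w' : ℕ → Pt d} {e : ℕ × ℕ} (he : IsEdgeOn a b e)
    (h : ∀ s, a ≤ s → s ≤ b → w s = w' s) : U w e.1 e.2 = U w' e.1 e.2 := by
  obtain ⟨h₁, h₂, h₃⟩ := he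
  simp only [U, h e.1 h₁ (by omega), h e.2 (by omega) h₃, h (e.2 - 1) (by omega) (by omega)]

lemma J_congr {w w' : ℕ → Pt d} (h : ∀ s ≤ m, w s = w' s) : J lam 0 m w = J lam 0 m w' :=
  Finset.sum_congr rfl fun Γ hΓ => Finset.prod_congr rfl fun e he => by
    rw [U_eq_of_eqOn ((mem_connGraphs.1 hΓ).1 e he) fun s _ hs => h s hs]

lemma K_eq_phi_shift (hmn : m ≤ n) (w : ℕ → Pt d) :
    K lam m n w = phi lam (n - m) fun s => w (s + m) := by
  rw [phi_eq_K]
  refine Finset.prod_nbij' (fun e => (e.1 - m, e.2 - m)) (fun e => (e.1 + m, e.2 + m))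
    ?_ ?_ ?_ ?_ ?_ <;> intro e he <;> obtain ⟨h₁, h₂, h₃⟩ := mem_edgesOn.1 he
  · exact mem_edgesOn.2 ⟨Nat.zero_le _, by omega, by omega⟩
  · exact mem_edgesOn.2 ⟨by omega, by omega, by omega⟩
  · exact Prod.ext (by simp only; omega) (by simp only; omega)
  · exact Prod.ext (by simp only; omega) (by simp only; omega)
  · simp only [U, show e.1 - m + m = e.1 by omega, show e.2 - m + m = e.2 by omega,
      show e.2 - m - 1 + m = e.2 - 1 by omega]

lemma phi_eq_K_add_sum_J (hn : 1 ≤ n) (w : ℕ → Pt d) :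
    phi lam n w = K lam 1 n w + ∑ m ∈ Finset.Icc 1 n, J lam 0 m w * K lam m n w := by
  rw [phi_eq_K, K, prod_one_add_edgesOn hn, ← Finset.Icc_add_one_left_eq_Ioc]
  rfl

lemma prod_mul_eq_neg_one_pow_mul (L : Finset (ℕ × ℕ)) (f : ℕ × ℕ → ℝ) :
    ∏ e ∈ L, lam * f e = (-1) ^ L.card * (lam ^ L.card * ∏ e ∈ L, -f e) := by
  rw [← mul_assoc, ← mul_pow, ← Finset.prod_const, ← Finset.prod_mul_distrib]
  exact Finset.prod_congr rfl fun _ _ => by ring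

/-- The signs `(-1)^N` of `π_m` cancel those of `∏_{st ∈ L} (-U_{st})`. -/
lemma piCoef_eq_sum_J (v : Pt d) : piCoef d lam m v = ∑ w : Walks d m 0 v, J lam 0 m w.1 := by
  simp only [J, sum_connGraphs_eq_sum_laces, sum_laces_eq_sum_lacesN, Nat.sub_zero]
  rw [Finset.sum_comm]
  refine Finset.sum_congr rfl fun N _ => ?_
  rw [piN, tsum_fintype, Finset.mul_sum, Finset.mul_sum]
  refine Finset.sum_congr rfl fun w _ => ?_
  rw [Finset.mul_sum, Finset.mul_sum]
  refine Finset.sum_congr rfl fun L hL => ?_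
  rw [prod_mul_eq_neg_one_pow_mul, (Finset.mem_filter.1 hL).2.2]
  ring

lemma sum_walks_mul_K (hmn : m ≤ n) (g : (ℕ → Pt d) → ℝ)
    (hg : ∀ w w' : ℕ → Pt d, (∀ s ≤ m, w s = w' s) → g w = g w') :
    ∑ w : Walks d n x y, g w.1 * K lam m n w.1 =
      ∑' v, (∑ w : Walks d m x v, g w.1) * cps d lam (n - m) v y := by
  rw [sum_walks_eq_tsum_sum_fiber m]
  refine tsum_congr fun v => ?_
  rw [cps_eq_sum, Finset.sum_mul_sum, ← Fintype.sum_prod_type']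
  refine Fintype.sum_equiv (walksSplitEquiv hmn v) _ _ fun w => ?_
  rw [K_eq_phi_shift lam hmn]
  congr 1
  exact hg _ _ fun s hs => by simp only [walksSplitEquiv, Equiv.coe_fn_mk, min_eq_left hs]

lemma card_walks_one (x v : Pt d) :
    Fintype.card (Walks d 1 x v) = if norm1 (v - x) = 1 then 1 else 0 := by
  split_ifs with h
  · refine Fintype.card_eq_one_iff.2 ⟨⟨fun s => if s = 0 then x else v, rfl,
      fun s hs => by dsimp only; rw [if_neg (by omega)],
      fun s hs => by simpa [show s = 0 by omega] using h⟩,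
      fun w => Subtype.ext (funext fun s => ?_)⟩
    rcases Nat.eq_zero_or_pos s with rfl | hs
    · exact w.2.1
    · rw [w.2.2.1 s hs]
      exact (if_neg (by omega)).symm
  · refine Fintype.card_eq_zero_iff.2 ⟨fun w => h ?_⟩
    simpa [w.2.1, w.2.2.1 1 le_rfl] using w.2.2.2 0 one_pos

lemma sum_walks_K_one (hn : 1 ≤ n) :
    ∑ w : Walks d n x y, K lam 1 n w.1 =
      ∑' u : {u : Pt d // norm1 (u - x) = 1}, cps d lam (n - 1) u y := by
  have := sum_walks_mul_K lam (x := x) (y := y) hn (fun _ => 1) fun _ _ _ => rfl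
  simp only [one_mul, Finset.sum_const, Finset.card_univ, card_walks_one, nsmul_eq_mul] at this
  refine this.trans (Eq.trans (tsum_congr fun u => ?_)
    (tsum_subtype {u : Pt d | norm1 (u - x) = 1} fun u => cps d lam (n - 1) u y).symm)
  simp only [Set.indicator_apply, Set.mem_ofPred_eq]
  split_ifs <;> simp

end Expansion

theorem lace_expansion_identity_general (d : ℕ) (lam : ℝ) (n : ℕ) (hn : 1 ≤ n) (x : Pt d) :
    cps d lam n 0 x =
      (∑' u : { u : Pt d // norm1 u = 1 }, cps d lam (n - 1) u.1 x) +
      ∑ m ∈ Finset.Icc 1 n, ∑' v : Pt d, piCoef d lam m v * cps d lam (n - m) v x := by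
  have hsplit : ∀ m ∈ Finset.Icc 1 n, ∑ w : Walks d n 0 x, J lam 0 m w.1 * K lam m n w.1 =
      ∑' v, piCoef d lam m v * cps d lam (n - m) v x := fun m hm => by
    simp only [sum_walks_mul_K lam (Finset.mem_Icc.1 hm).2 _ fun _ _ => J_congr lam,
      piCoef_eq_sum_J]
  rw [cps_eq_sum, Finset.sum_congr rfl fun w _ => phi_eq_K_add_sum_J lam hn w.1,
    Finset.sum_add_distrib, Finset.sum_comm, sum_walks_K_one lam hn, Finset.sum_congr rfl hsplit,
    show (fun u : Pt d => norm1 (u - 0) = 1) = fun u => norm1 u = 1 from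
      funext fun u => by rw [sub_zero]]

/-- **Proposition 3.2** (lace expansion, coefficient form): for every `d ≥ 1`,
`λ ∈ [0,1]`, `n ≥ 1` and `x ∈ ℤ^d`,
`c_n^λ(0,x) = Σ_{|u|=1} c_{n-1}^λ(u,x) + Σ_{m=1}^n Σ_v π_m(v) c_{n-m}^λ(v,x)`. -/
theorem lace_expansion_identity (d : ℕ) (hd : 1 ≤ d) (lam : ℝ)
    (hlam0 : 0 ≤ lam) (hlam1 : lam ≤ 1) (n : ℕ) (hn : 1 ≤ n) (x : Pt d) :
    cps d lam n 0 x =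
      (∑' u : { u : Pt d // norm1 u = 1 }, cps d lam (n - 1) u.1 x) +
      ∑ m ∈ Finset.Icc 1 n, ∑' v : Pt d, piCoef d lam m v * cps d lam (n - m) v x :=
  lace_expansion_identity_general d lam n hn x

end PrudentWalk
end
end

section
/- Diagrammatic bound on the lace-expansion coefficients (Proposition 3.3, eq. (3.5)): For every dimension d≥1, every λ∈(0,1], every z∈[0,z_c(λ)) and every N≥1, Σ_{x∈ℤ^d} Π_z^{(N)}(x) ≤ (dzλ)^N (B_z^λ)^N, as an inequality in [0,∞]. -/
open scoped BigOperators ENNReal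
open scoped Classical

noncomputable section

namespace PrudentWalk

/-! ### Auxiliary development for the diagrammatic bound -/

section Basic

variable {d : ℕ} {lam z : ℝ}

lemma U_cases (w : ℕ → Pt d) (s t : ℕ) : U w s t = 0 ∨ U w s t = -1 := by
  unfold U; split
  · exact Or.inr rfl
  · exact Or.inl rfl

lemma U_exists_of_ne {w : ℕ → Pt d} {s t : ℕ} (h : U w s t ≠ 0) :
    ∃ m : ℕ, w s - w t = (m : ℤ) • (w t - w (t - 1)) := by
  unfold U at h; by_contra hc
  rw [if_neg hc] at h; exact h rfl

lemma U_eq_neg_one_of_ne {w : ℕ → Pt d} {s t : ℕ} (h : U w s t ≠ 0) : U w s t = -1 := by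
  rcases U_cases w s t with h0 | h1
  · exact absurd h0 h
  · exact h1

lemma factor_nonneg (hlam0 : 0 ≤ lam) (hlam1 : lam ≤ 1) (w : ℕ → Pt d) (s t : ℕ) :
    0 ≤ 1 + lam * U w s t := by
  rcases U_cases w s t with h | h <;> rw [h] <;> nlinarith

lemma factor_le_one (hlam0 : 0 ≤ lam) (w : ℕ → Pt d) (s t : ℕ) :
    1 + lam * U w s t ≤ 1 := by
  rcases U_cases w s t with h | h <;> rw [h] <;> nlinarith

/-- Product of lace-expansion factors over an arbitrary finite edge set. -/
def edgeProd (lam : ℝ) (F : Finset (ℕ × ℕ)) (w : ℕ → Pt d) : ℝ :=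
  ∏ e ∈ F, (1 + lam * U w e.1 e.2)

lemma edgeProd_nonneg (hlam0 : 0 ≤ lam) (hlam1 : lam ≤ 1) (F : Finset (ℕ × ℕ))
    (w : ℕ → Pt d) : 0 ≤ edgeProd lam F w :=
  Finset.prod_nonneg fun e _ => factor_nonneg hlam0 hlam1 w e.1 e.2

lemma edgeProd_le_one (hlam0 : 0 ≤ lam) (hlam1 : lam ≤ 1) (F : Finset (ℕ × ℕ))
    (w : ℕ → Pt d) : edgeProd lam F w ≤ 1 :=
  Finset.prod_le_one (fun e _ => factor_nonneg hlam0 hlam1 w e.1 e.2)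
    (fun e _ => factor_le_one hlam0 w e.1 e.2)

lemma edgeProd_le_of_subset (hlam0 : 0 ≤ lam) (hlam1 : lam ≤ 1)
    {F F' : Finset (ℕ × ℕ)} (hFF : F' ⊆ F) (w : ℕ → Pt d) :
    edgeProd lam F w ≤ edgeProd lam F' w := by
  unfold edgeProd
  rw [← Finset.prod_sdiff hFF]
  have h1 : (∏ e ∈ F \ F', (1 + lam * U w e.1 e.2)) ≤ 1 :=
    Finset.prod_le_one (fun e _ => factor_nonneg hlam0 hlam1 w e.1 e.2)
      (fun e _ => factor_le_one hlam0 w e.1 e.2)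
  have h2 : 0 ≤ ∏ e ∈ F', (1 + lam * U w e.1 e.2) :=
    Finset.prod_nonneg fun e _ => factor_nonneg hlam0 hlam1 w e.1 e.2
  nlinarith

/-- The set of edges lying within the interval `[p,q]`. -/
def edgesIn (p q : ℕ) : Finset (ℕ × ℕ) :=
  (Finset.range (q + 1) ×ˢ Finset.range (q + 1)).filter fun e =>
    p ≤ e.1 ∧ e.1 < e.2 ∧ e.2 ≤ q

lemma mem_edgesIn {p q : ℕ} {e : ℕ × ℕ} :
    e ∈ edgesIn p q ↔ p ≤ e.1 ∧ e.1 < e.2 ∧ e.2 ≤ q := by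
  unfold edgesIn
  simp only [Finset.mem_filter, Finset.mem_product, Finset.mem_range]
  constructor
  · rintro ⟨-, h⟩; exact h
  · rintro ⟨h1, h2, h3⟩; exact ⟨⟨by omega, by omega⟩, h1, h2, h3⟩

lemma edgesIn_disjoint {p q p' q' : ℕ} (h : q ≤ p') :
    Disjoint (edgesIn p q) (edgesIn p' q') := by
  rw [Finset.disjoint_left]
  intro e he he'
  rw [mem_edgesIn] at he he'
  omega

lemma prod_double_eq_edges (n : ℕ) (F : ℕ → ℕ → ℝ) :
    (∏ t ∈ Finset.range (n + 1), ∏ s ∈ Finset.range t, F s t)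
      = ∏ e ∈ edgesIn 0 n, F e.1 e.2 := by
  rw [Finset.prod_sigma']
  apply Finset.prod_nbij' (fun p => (p.2, p.1)) (fun e => ⟨e.2, e.1⟩)
  · intro a ha
    simp only [Finset.mem_sigma, Finset.mem_range] at ha
    rw [mem_edgesIn]; omega
  · intro e he
    rw [mem_edgesIn] at he
    simp only [Finset.mem_sigma, Finset.mem_range]; omega
  · intro a _; rfl
  · intro e _; rfl
  · intro a _; rfl

lemma phi_eq_edgeProd (n : ℕ) (w : ℕ → Pt d) :
    phi lam n w = edgeProd lam (edgesIn 0 n) w := by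
  unfold phi edgeProd
  exact prod_double_eq_edges n fun s t => 1 + lam * U w s t

/-- Truncated, translated subwalk of `w` on the interval `[p, p+ℓ]`. -/
def trunc (w : ℕ → Pt d) (p ℓ : ℕ) : ℕ → Pt d := fun j => w (min j ℓ + p) - w p

lemma trunc_isWalk {n : ℕ} {x y : Pt d} {w : ℕ → Pt d} (hw : IsWalk n x y w)
    {p q : ℕ} (hpq : p ≤ q) (hq : q ≤ n) :
    IsWalk (q - p) 0 (w q - w p) (trunc w p (q - p)) := by
  obtain ⟨h0, hfr, hstep⟩ := hw
  refine ⟨?_, ?_, ?_⟩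
  · simp [trunc]
  · intro s hs
    have h : min s (q - p) + p = q := by omega
    simp only [trunc, h]
  · intro s hs
    have h1 : min (s + 1) (q - p) = s + 1 := by omega
    have h2 : min s (q - p) = s := by omega
    simp only [trunc, h1, h2]
    have : w (s + 1 + p) - w p - (w (s + p) - w p) = w (s + p + 1) - w (s + p) := by
      have : s + 1 + p = s + p + 1 := by omega
      rw [this]; ring
    rw [this]
    exact hstep (s + p) (by omega)

lemma U_trunc (w : ℕ → Pt d) (p ℓ : ℕ) {s t : ℕ} (hs : s < t) (ht : t ≤ ℓ) :
    U (trunc w p ℓ) s t = U w (s + p) (t + p) := by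
  have hs' : min s ℓ = s := by omega
  have ht' : min t ℓ = t := by omega
  have ht1 : min (t - 1) ℓ = t - 1 := by omega
  have harg : t - 1 + p = t + p - 1 := by omega
  unfold U
  have h1 : trunc w p ℓ s - trunc w p ℓ t = w (s + p) - w (t + p) := by
    simp only [trunc, hs', ht']; ring
  have h2 : trunc w p ℓ t - trunc w p ℓ (t - 1) = w (t + p) - w (t + p - 1) := by
    simp only [trunc, ht', ht1, harg]; ring
  rw [h1, h2]

lemma phi_trunc (w : ℕ → Pt d) {p q : ℕ} (hpq : p ≤ q) :
    phi lam (q - p) (trunc w p (q - p)) = edgeProd lam (edgesIn p q) w := by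
  rw [phi_eq_edgeProd]
  unfold edgeProd
  apply Finset.prod_nbij' (fun e => (e.1 + p, e.2 + p)) (fun e => (e.1 - p, e.2 - p))
  · intro e he; rw [mem_edgesIn] at he ⊢; omega
  · intro e he; rw [mem_edgesIn] at he ⊢; omega
  · intro e he; rw [mem_edgesIn] at he; simp only; congr 1 <;> omega
  · intro e he; rw [mem_edgesIn] at he; simp only; congr 1 <;> omega
  · intro e he
    rw [mem_edgesIn] at he
    simp only
    rw [U_trunc w p (q - p) he.2.1 (by omega)]

end Basic

section WalksFinite

variable {d : ℕ}

lemma abs_coord_le_norm1 (v : Pt d) (i : Fin d) : |v i| ≤ norm1 v :=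
  Finset.single_le_sum (f := fun j => |v j|) (fun j _ => abs_nonneg _) (Finset.mem_univ i)

lemma walk_coord_bound {n : ℕ} {x y : Pt d} {w : ℕ → Pt d} (hw : IsWalk n x y w) :
    ∀ s, s ≤ n → ∀ i, |w s i - x i| ≤ (n : ℤ) := by
  obtain ⟨h0, hfr, hstep⟩ := hw
  have key : ∀ s, ∀ i : Fin d, s ≤ n → |w s i - x i| ≤ (s : ℤ) := by
    intro s
    induction s with
    | zero => intro i _; simp [h0]
    | succ s ih =>
      intro i hs
      have h1 := ih i (by omega)
      have h2 : |w (s + 1) i - w s i| ≤ 1 := by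
        have h3 := abs_coord_le_norm1 (w (s + 1) - w s) i
        rw [hstep s (by omega)] at h3
        simpa using h3
      have h4 : |w (s + 1) i - x i| ≤ |w (s + 1) i - w s i| + |w s i - x i| := by
        have h5 : w (s + 1) i - x i = (w (s + 1) i - w s i) + (w s i - x i) := by ring
        rw [h5]; exact abs_add_le _ _
      push_cast
      linarith
  intro s hs i
  exact (key s i hs).trans (by exact_mod_cast hs)

instance walksFinite (n : ℕ) (x y : Pt d) : Finite (Walks d n x y) := by
  classical
  apply Finite.of_injective
    (fun w : Walks d n x y =>
      (fun s i => (⟨w.1 s.1 i - x i, by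
        rw [Finset.mem_Icc]
        have h := walk_coord_bound w.2 s.1 (by omega) i
        rw [abs_le] at h; exact h⟩ : (Finset.Icc (-(n : ℤ)) (n : ℤ) : Finset ℤ)) :
        Fin (n + 1) → Fin d → (Finset.Icc (-(n : ℤ)) (n : ℤ) : Finset ℤ)))
  intro w w' h
  apply Subtype.ext; funext s
  by_cases hs : s ≤ n
  · funext i
    have h2 := congrFun (congrFun h ⟨s, by omega⟩) i
    have h3 : w.1 s i - x i = w'.1 s i - x i := congrArg Subtype.val h2
    omega
  · rw [w.2.2.1 s (by omega), w'.2.2.1 s (by omega)]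

end WalksFinite

section GFacts

variable {d : ℕ} {lam z : ℝ}

lemma phi_nonneg (hlam0 : 0 ≤ lam) (hlam1 : lam ≤ 1) (n : ℕ) (w : ℕ → Pt d) :
    0 ≤ phi lam n w := by
  rw [phi_eq_edgeProd]; exact edgeProd_nonneg hlam0 hlam1 _ w

lemma ofReal_cps (hlam0 : 0 ≤ lam) (hlam1 : lam ≤ 1) (n : ℕ) (x y : Pt d) :
    ENNReal.ofReal (cps d lam n x y)
      = ∑' w : Walks d n x y, ENNReal.ofReal (phi lam n w.1) :=
  ENNReal.ofReal_tsum_of_nonneg (fun w => phi_nonneg hlam0 hlam1 n w.1) Summable.of_finite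

lemma G_eq (hlam0 : 0 ≤ lam) (hlam1 : lam ≤ 1) (hz0 : 0 ≤ z) (x y : Pt d) :
    G d lam z x y
      = ∑' ℓ : ℕ, ∑' w : Walks d ℓ x y, ENNReal.ofReal (z ^ ℓ * phi lam ℓ w.1) := by
  unfold G
  apply tsum_congr; intro n
  rw [ofReal_cps hlam0 hlam1, ← ENNReal.ofReal_pow hz0, ← ENNReal.tsum_mul_right]
  apply tsum_congr; intro w
  rw [← ENNReal.ofReal_mul (phi_nonneg hlam0 hlam1 n w.1), mul_comm]

lemma U_add_const (w : ℕ → Pt d) (v : Pt d) (s t : ℕ) :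
    U (fun j => w j + v) s t = U w s t := by
  have h : ∀ a b : ℕ, (w a + v) - (w b + v) = w a - w b := fun a b => by ring
  unfold U
  simp only [h]

lemma phi_add_const (lam : ℝ) (n : ℕ) (w : ℕ → Pt d) (v : Pt d) :
    phi lam n (fun j => w j + v) = phi lam n w := by
  unfold phi
  simp only [U_add_const]

/-- Translation equivalence of walks. -/
def transWalkEquiv (v : Pt d) {n : ℕ} {x y : Pt d} :
    Walks d n x y ≃ Walks d n (x + v) (y + v) where
  toFun w := ⟨fun s => w.1 s + v, by
    obtain ⟨h0, hfr, hstep⟩ := w.2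
    refine ⟨by show w.1 0 + v = x + v; rw [h0],
      fun s hs => by show w.1 s + v = y + v; rw [hfr s hs], fun s hs => ?_⟩
    show norm1 (w.1 (s + 1) + v - (w.1 s + v)) = 1
    have : w.1 (s + 1) + v - (w.1 s + v) = w.1 (s + 1) - w.1 s := by ring
    rw [this]; exact hstep s hs⟩
  invFun w := ⟨fun s => w.1 s - v, by
    obtain ⟨h0, hfr, hstep⟩ := w.2
    refine ⟨by show w.1 0 - v = x; rw [h0]; abel,
      fun s hs => by show w.1 s - v = y; rw [hfr s hs]; abel, fun s hs => ?_⟩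
    show norm1 (w.1 (s + 1) - v - (w.1 s - v)) = 1
    have : w.1 (s + 1) - v - (w.1 s - v) = w.1 (s + 1) - w.1 s := by ring
    rw [this]; exact hstep s hs⟩
  left_inv w := by apply Subtype.ext; funext s; simp
  right_inv w := by apply Subtype.ext; funext s; simp

lemma cps_translate (lam : ℝ) (n : ℕ) (x y v : Pt d) :
    cps d lam n (x + v) (y + v) = cps d lam n x y := by
  unfold cps
  rw [← (transWalkEquiv v (n := n) (x := x) (y := y)).tsum_eq]
  apply tsum_congr; intro w
  exact phi_add_const lam n w.1 v

lemma G_translate (x y v : Pt d) : G d lam z (x + v) (y + v) = G d lam z x y := by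
  unfold G
  apply tsum_congr; intro n
  rw [cps_translate]

end GFacts

section UnitVec

variable {d : ℕ}

lemma unit_structure {v : Pt d} (hv : norm1 v = 1) :
    ∃ i : Fin d, (v i = 1 ∨ v i = -1) ∧ ∀ j, j ≠ i → v j = 0 := by
  classical
  have hex : ∃ i, v i ≠ 0 := by
    by_contra hc; push_neg at hc
    unfold norm1 at hv
    rw [Finset.sum_eq_zero (fun j _ => by rw [hc j]; simp)] at hv
    exact absurd hv (by norm_num)
  obtain ⟨i, hi⟩ := hex
  have hsplit : (∑ j ∈ Finset.univ.erase i, |v j|) + |v i| = norm1 v :=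
    Finset.sum_erase_add _ _ (Finset.mem_univ i)
  have hnn : 0 ≤ ∑ j ∈ Finset.univ.erase i, |v j| :=
    Finset.sum_nonneg fun j _ => abs_nonneg _
  have h1 : 1 ≤ |v i| := Int.one_le_abs (by omega)
  have habs : |v i| = 1 := by omega
  have hrest : ∑ j ∈ Finset.univ.erase i, |v j| = 0 := by omega
  refine ⟨i, ?_, ?_⟩
  · rcases abs_eq (by norm_num : (0:ℤ) ≤ 1) |>.1 habs with h | h
    · exact Or.inl h
    · exact Or.inr h
  · intro j hj
    have := (Finset.sum_eq_zero_iff_of_nonneg (fun j _ => abs_nonneg (v j))).1 hrest j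
      (Finset.mem_erase.2 ⟨hj, Finset.mem_univ j⟩)
    exact abs_eq_zero.1 this

lemma norm1_single (i : Fin d) (c : ℤ) : norm1 (Pi.single i c : Pt d) = |c| := by
  unfold norm1
  rw [Finset.sum_eq_single i]
  · simp
  · intro j _ hj; rw [Pi.single_eq_of_ne hj]; simp
  · intro h; exact absurd (Finset.mem_univ i) h

lemma norm1_smul (k : ℤ) (hk : 0 ≤ k) (v : Pt d) : norm1 (k • v) = k * norm1 v := by
  unfold norm1
  rw [Finset.mul_sum]
  apply Finset.sum_congr rfl
  intro i _
  have : (k • v) i = k * v i := rfl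
  rw [this, abs_mul, abs_of_nonneg hk]

/-- Unit vectors of `ℤ^d`. -/
def EVec (d : ℕ) := {v : Pt d // norm1 v = 1}

lemma smul_unit_inj {m m' : ℕ} {e e' : EVec d}
    (h : ((m : ℤ) + 1) • e.1 = ((m' : ℤ) + 1) • e'.1) : m = m' ∧ e = e' := by
  have hn : ((m : ℤ) + 1) * norm1 e.1 = ((m' : ℤ) + 1) * norm1 e'.1 := by
    rw [← norm1_smul _ (by positivity), ← norm1_smul _ (by positivity), h]
  rw [e.2, e'.2] at hn
  have hm : m = m' := by omega
  subst hm
  have he : e.1 = e'.1 := by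
    have hne : ((m : ℤ) + 1) ≠ 0 := by positivity
    exact smul_right_injective (Pt d) hne h
  exact ⟨rfl, Subtype.ext he⟩

lemma decomp_perp (m : ℕ) (e : EVec d) :
    Perp (((m : ℤ) + 1) • e.1) 0 ∧ ((m : ℤ) + 1) • e.1 ≠ 0 := by
  obtain ⟨i, hsign, hzero⟩ := unit_structure e.2
  constructor
  · exact ⟨i, fun j hj => by
      have : (((m : ℤ) + 1) • e.1) j = ((m : ℤ) + 1) * e.1 j := rfl
      rw [this, hzero j hj]; simp⟩
  · intro hc
    have h0 : (((m : ℤ) + 1) • e.1) i = 0 := by rw [hc]; rfl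
    have h1 : (((m : ℤ) + 1) • e.1) i = ((m : ℤ) + 1) * e.1 i := rfl
    rcases hsign with h | h <;> rw [h1, h] at h0 <;> omega

lemma perp_neg {x : Pt d} (h : Perp x 0) : Perp (-x) 0 := by
  obtain ⟨i, hi⟩ := h
  exact ⟨i, fun j hj => by
    have := hi j hj
    have h2 : (-x) j = -(x j) := rfl
    rw [h2, this]; simp⟩

lemma exists_unit_decomp {x : Pt d} (hx : Perp x 0 ∧ x ≠ 0) :
    ∃ (m : ℕ) (e : EVec d), x = ((m : ℤ) + 1) • e.1 := by
  classical
  obtain ⟨⟨i, hi⟩, hne⟩ := hx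
  have hxi : x i ≠ 0 := by
    intro hc
    apply hne
    funext j
    by_cases hj : j = i
    · subst hj; exact hc
    · have := hi j hj; simpa using this
  set c := x i with hc
  refine ⟨(|c|).toNat - 1, ⟨Pi.single i (if 0 < c then 1 else -1), ?_⟩, ?_⟩
  · rw [norm1_single]; split <;> norm_num
  · have hge : 1 ≤ |c| := Int.one_le_abs hxi
    have hcast : ((((|c|).toNat - 1 : ℕ) : ℤ) + 1) = |c| := by
      have : ((|c|).toNat : ℤ) = |c| := Int.toNat_of_nonneg (abs_nonneg c)
      omega
    rw [hcast]
    funext j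
    by_cases hj : j = i
    · subst hj
      have h2 : (|c| • (Pi.single j (if 0 < c then 1 else -1) : Pt d)) j
          = |c| * (if 0 < c then 1 else -1) := by
        have : (Pi.single j (if 0 < c then (1:ℤ) else -1) : Pt d) j
            = (if 0 < c then (1:ℤ) else -1) := Pi.single_eq_same _ _
        rw [show (|c| • (Pi.single j (if 0 < c then (1:ℤ) else -1) : Pt d)) j
            = |c| * (Pi.single j (if 0 < c then (1:ℤ) else -1) : Pt d) j from rfl, this]
      rw [h2]
      rcases abs_cases c with ⟨h3, _⟩ | ⟨h3, h4⟩
      · rw [if_pos (by omega), h3]; ring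
      · rw [if_neg (by omega), h3]; ring
    · have h2 : (|c| • (Pi.single i (if 0 < c then (1:ℤ) else -1) : Pt d)) j
          = |c| * (Pi.single i (if 0 < c then (1:ℤ) else -1) : Pt d) j := rfl
      rw [h2, Pi.single_eq_of_ne hj]
      rw [hi j hj]; simp

lemma tsum_unit_indicator (hd : 1 ≤ d) (x2 y : Pt d) :
    (∑' me : ℕ × EVec d,
        (if x2 + ((me.1 : ℤ) + 1) • me.2.1 = y then (1 : ℝ≥0∞) else 0))
      = (d : ℝ≥0∞) * indPerp d (x2 - y) := by
  classical
  by_cases hP : Perp (x2 - y) 0 ∧ x2 - y ≠ 0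
  · have hP' : Perp (y - x2) 0 ∧ y - x2 ≠ 0 := by
      constructor
      · have := perp_neg hP.1
        rw [show -(x2 - y) = y - x2 by abel] at this
        exact this
      · intro hc
        apply hP.2
        have : x2 - y = -(y - x2) := by abel
        rw [this, hc]; simp
    obtain ⟨m₀, e₀, hme⟩ := exists_unit_decomp hP'
    have key : ∀ me : ℕ × EVec d,
        (x2 + ((me.1 : ℤ) + 1) • me.2.1 = y) ↔ me = (m₀, e₀) := by
      intro me
      constructor
      · intro h
        have h2 : ((me.1 : ℤ) + 1) • me.2.1 = ((m₀ : ℤ) + 1) • e₀.1 := by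
          rw [← hme]
          have : ((me.1 : ℤ) + 1) • me.2.1 = y - x2 := by
            rw [← h]; abel
          rw [this]
        obtain ⟨h3, h4⟩ := smul_unit_inj h2
        exact Prod.ext h3 h4
      · rintro rfl
        simp only
        rw [← hme]; abel
    calc (∑' me : ℕ × EVec d,
        (if x2 + ((me.1 : ℤ) + 1) • me.2.1 = y then (1 : ℝ≥0∞) else 0))
        = ∑' me : ℕ × EVec d, (if me = (m₀, e₀) then (1 : ℝ≥0∞) else 0) := by
          apply tsum_congr; intro me
          rw [if_congr (key me) rfl rfl]
      _ = 1 := tsum_ite_eq (m₀, e₀) 1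
      _ = (d : ℝ≥0∞) * indPerp d (x2 - y) := by
          unfold indPerp
          rw [if_pos hP]
          rw [ENNReal.mul_inv_cancel (Nat.cast_ne_zero.mpr (by omega)) (by simp)]
  · have hzero : ∀ me : ℕ × EVec d,
        (if x2 + ((me.1 : ℤ) + 1) • me.2.1 = y then (1 : ℝ≥0∞) else 0) = 0 := by
      intro me
      rw [if_neg]
      intro h
      apply hP
      have h2 : x2 - y = -(((me.1 : ℤ) + 1) • me.2.1) := by rw [← h]; abel
      obtain ⟨hperp, hne⟩ := decomp_perp me.1 me.2
      constructor
      · rw [h2]; exact perp_neg hperp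
      · rw [h2]; simpa using hne
    rw [tsum_congr hzero]
    unfold indPerp
    rw [if_neg hP]
    simp

end UnitVec

section BlockChain

variable {d : ℕ} {lam z : ℝ}

/-- Walks of arbitrary length from `0`, with free endpoint. -/
abbrev Wk (d : ℕ) := Σ q : ℕ × Pt d, Walks d q.1 0 q.2

def wkWt (lam z : ℝ) {d : ℕ} (p : Wk d) : ℝ≥0∞ :=
  ENNReal.ofReal (z ^ p.1.1 * phi lam p.1.1 p.2.1)

def wkEnd {d : ℕ} (p : Wk d) : Pt d := p.1.2

lemma tsum_wk (hlam0 : 0 ≤ lam) (hlam1 : lam ≤ 1) (hz0 : 0 ≤ z)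
    (u : Pt d) (f : Pt d → ℝ≥0∞) :
    ∑' p : Wk d, wkWt lam z p * f (u + wkEnd p)
      = ∑' x1 : Pt d, G d lam z u x1 * f x1 := by
  calc ∑' p : Wk d, wkWt lam z p * f (u + wkEnd p)
      = ∑' (q : ℕ × Pt d), ∑' (w : Walks d q.1 0 q.2),
          ENNReal.ofReal (z ^ q.1 * phi lam q.1 w.1) * f (u + q.2) :=
        ENNReal.tsum_sigma' _
    _ = ∑' (ℓ : ℕ), ∑' (v : Pt d), ∑' (w : Walks d ℓ 0 v),
          ENNReal.ofReal (z ^ ℓ * phi lam ℓ w.1) * f (u + v) := ENNReal.tsum_prod'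
    _ = ∑' (v : Pt d), ∑' (ℓ : ℕ), ∑' (w : Walks d ℓ 0 v),
          ENNReal.ofReal (z ^ ℓ * phi lam ℓ w.1) * f (u + v) := ENNReal.tsum_comm
    _ = ∑' (v : Pt d), G d lam z 0 v * f (u + v) := by
        apply tsum_congr; intro v
        simp only [ENNReal.tsum_mul_right]
        rw [G_eq hlam0 hlam1 hz0]
    _ = ∑' (v : Pt d), G d lam z u (u + v) * f (u + v) := by
        apply tsum_congr; intro v
        have h := G_translate (lam := lam) (z := z) 0 v u
        rw [show (0 : Pt d) + u = u by abel, show v + u = u + v by abel] at h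
        rw [h]
    _ = ∑' (x1 : Pt d), G d lam z u x1 * f x1 :=
        (Equiv.addLeft u).tsum_eq (fun x1 => G d lam z u x1 * f x1)

lemma bubble_bound (hlam0 : 0 ≤ lam) (hlam1 : lam ≤ 1) (hz0 : 0 ≤ z) (u y : Pt d) :
    ∑' x1 : Pt d, ∑' x2 : Pt d,
        G d lam z u x1 * (G d lam z x1 x2 * indPerp d (x2 - y))
      ≤ bubble d lam z := by
  have step1 : ∑' x1 : Pt d, ∑' x2 : Pt d,
        G d lam z u x1 * (G d lam z x1 x2 * indPerp d (x2 - y))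
      = ∑' a : Pt d, ∑' b : Pt d,
        G d lam z 0 a * (G d lam z a b * indPerp d (b - (y - u))) := by
    rw [← (Equiv.addLeft u).tsum_eq (fun x1 => ∑' x2 : Pt d,
        G d lam z u x1 * (G d lam z x1 x2 * indPerp d (x2 - y)))]
    apply tsum_congr; intro a
    rw [← (Equiv.addLeft u).tsum_eq (fun x2 =>
        G d lam z u ((Equiv.addLeft u) a) * (G d lam z ((Equiv.addLeft u) a) x2 * indPerp d (x2 - y)))]
    apply tsum_congr; intro b
    have e1 : (Equiv.addLeft u) a = u + a := rfl
    have e2 : (Equiv.addLeft u) b = u + b := rfl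
    rw [e1, e2]
    have h1 : G d lam z u (u + a) = G d lam z 0 a := by
      have h := G_translate (lam := lam) (z := z) 0 a u
      rw [show (0 : Pt d) + u = u by abel, show a + u = u + a by abel] at h
      exact h
    have h2 : G d lam z (u + a) (u + b) = G d lam z a b := by
      have h := G_translate (lam := lam) (z := z) a b u
      rw [show a + u = u + a by abel, show b + u = u + b by abel] at h
      exact h
    have h3 : u + b - y = b - (y - u) := by abel
    rw [h1, h2, h3]
  rw [step1]
  have step2 : ∑' a : Pt d, ∑' b : Pt d,
        G d lam z 0 a * (G d lam z a b * indPerp d (b - (y - u)))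
      = ∑' a : Pt d, ∑' b : Pt d,
        G d lam z 0 a * G d lam z a b * indPerp d (b - (y - u)) := by
    apply tsum_congr; intro a; apply tsum_congr; intro b; ring
  rw [step2]
  exact le_iSup (fun y' => ∑' a : Pt d, ∑' b : Pt d,
    G d lam z 0 a * G d lam z a b * indPerp d (b - y')) (y - u)

/-- A block of the chain decomposition: two subwalks, a multiplicity and a direction. -/
abbrev Blk (d : ℕ) := Wk d × Wk d × ℕ × EVec d

def blkWt (lam z : ℝ) {d : ℕ} (u y : Pt d) (b : Blk d) : ℝ≥0∞ :=
  wkWt lam z b.1 * (wkWt lam z b.2.1 * (ENNReal.ofReal (z * lam) *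
    (if u + wkEnd b.1 + wkEnd b.2.1 + ((b.2.2.1 : ℤ) + 1) • b.2.2.2.1 = y
      then (1 : ℝ≥0∞) else 0)))

lemma blk_sum (hd : 1 ≤ d) (hlam0 : 0 ≤ lam) (hlam1 : lam ≤ 1) (hz0 : 0 ≤ z)
    (u y : Pt d) :
    ∑' b : Blk d, blkWt lam z u y b
      ≤ ENNReal.ofReal ((d : ℝ) * z * lam) * bubble d lam z := by
  classical
  have hinner : ∀ x2 : Pt d,
      (∑' me : ℕ × EVec d, ENNReal.ofReal (z * lam) *
        (if x2 + ((me.1 : ℤ) + 1) • me.2.1 = y then (1 : ℝ≥0∞) else 0))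
      = ENNReal.ofReal (z * lam) * ((d : ℝ≥0∞) * indPerp d (x2 - y)) := by
    intro x2
    rw [ENNReal.tsum_mul_left, tsum_unit_indicator hd]
  have hmain : ∑' b : Blk d, blkWt lam z u y b
      = ∑' x1 : Pt d, G d lam z u x1 * ∑' x2 : Pt d, G d lam z x1 x2 *
          (ENNReal.ofReal (z * lam) * ((d : ℝ≥0∞) * indPerp d (x2 - y))) := by
    rw [ENNReal.tsum_prod']
    have hw2 : ∀ w1 : Wk d,
        (∑' r : Wk d × ℕ × EVec d, blkWt lam z u y (w1, r))
        = wkWt lam z w1 * ∑' x2 : Pt d, G d lam z (u + wkEnd w1) x2 *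
            (ENNReal.ofReal (z * lam) * ((d : ℝ≥0∞) * indPerp d (x2 - y))) := by
      intro w1
      rw [ENNReal.tsum_prod']
      unfold blkWt
      simp only [ENNReal.tsum_mul_left]
      congr 1
      rw [← tsum_wk hlam0 hlam1 hz0 (u + wkEnd w1)
        (fun x2 => ENNReal.ofReal (z * lam) * ((d : ℝ≥0∞) * indPerp d (x2 - y)))]
      apply tsum_congr; intro w2
      congr 2
      exact tsum_unit_indicator hd (u + wkEnd w1 + wkEnd w2) y
    rw [tsum_congr hw2]
    rw [tsum_wk hlam0 hlam1 hz0 u (fun x1 => ∑' x2 : Pt d, G d lam z x1 x2 *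
      (ENNReal.ofReal (z * lam) * ((d : ℝ≥0∞) * indPerp d (x2 - y))))]
  rw [hmain]
  have hre : ∑' x1 : Pt d, G d lam z u x1 * ∑' x2 : Pt d, G d lam z x1 x2 *
        (ENNReal.ofReal (z * lam) * ((d : ℝ≥0∞) * indPerp d (x2 - y)))
      = (ENNReal.ofReal (z * lam) * (d : ℝ≥0∞)) *
        ∑' x1 : Pt d, ∑' x2 : Pt d,
          G d lam z u x1 * (G d lam z x1 x2 * indPerp d (x2 - y)) := by
    rw [← ENNReal.tsum_mul_left]
    apply tsum_congr; intro x1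
    rw [← ENNReal.tsum_mul_left, ← ENNReal.tsum_mul_left]
    apply tsum_congr; intro x2
    ring
  rw [hre]
  have hsc : ENNReal.ofReal (z * lam) * (d : ℝ≥0∞)
      = ENNReal.ofReal ((d : ℝ) * z * lam) := by
    rw [← ENNReal.ofReal_natCast d,
      ← ENNReal.ofReal_mul (by positivity : (0:ℝ) ≤ z * lam)]
    congr 1; ring
  rw [hsc]
  exact mul_le_mul_right (bubble_bound hlam0 hlam1 hz0 u y) _

def stepAnch {d : ℕ} (p : Pt d × Pt d) (b : Blk d) : Pt d × Pt d :=
  (p.1 + wkEnd b.1 + wkEnd b.2.1 + b.2.2.2.1, p.1 + wkEnd b.1)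

def anch {d : ℕ} (p : Pt d × Pt d) (l : List (Blk d)) : Pt d × Pt d :=
  l.foldl stepAnch p

def chainWt (lam z : ℝ) {d : ℕ} (p : Pt d × Pt d) {K : ℕ} (f : Fin K → Blk d) : ℝ≥0∞ :=
  ∏ i : Fin K, blkWt lam z (anch p ((List.ofFn f).take i.1)).1
    (anch p ((List.ofFn f).take i.1)).2 (f i)

lemma chainWt_cons (p : Pt d × Pt d) (b : Blk d) {K : ℕ} (g : Fin K → Blk d) :
    chainWt lam z p (Fin.cons b g) = blkWt lam z p.1 p.2 b * chainWt lam z (stepAnch p b) g := by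
  unfold chainWt
  rw [Fin.prod_univ_succ]
  congr 1
  apply Finset.prod_congr rfl
  intro i _
  have hofn : List.ofFn (Fin.cons b g : Fin (K+1) → Blk d) = b :: List.ofFn g := by
    rw [List.ofFn_succ]
    simp only [Fin.cons_zero, Fin.cons_succ]
  have htake : (List.ofFn (Fin.cons b g : Fin (K+1) → Blk d)).take ((i.succ : Fin (K+1)).1)
      = b :: (List.ofFn g).take i.1 := by
    rw [hofn]
    have : ((i.succ : Fin (K+1)) : ℕ) = i.1 + 1 := rfl
    rw [this, List.take_succ_cons]
  rw [htake]
  have hanch : anch p (b :: (List.ofFn g).take i.1) = anch (stepAnch p b) ((List.ofFn g).take i.1) := rfl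
  rw [hanch, Fin.cons_succ]

lemma chain_sum_le (hd : 1 ≤ d) (hlam0 : 0 ≤ lam) (hlam1 : lam ≤ 1) (hz0 : 0 ≤ z) :
    ∀ (K : ℕ) (p : Pt d × Pt d),
    ∑' f : Fin K → Blk d, chainWt lam z p f
      ≤ (ENNReal.ofReal ((d : ℝ) * z * lam) * bubble d lam z) ^ K := by
  intro K
  induction K with
  | zero =>
    intro p
    have h1 : ∀ f : Fin 0 → Blk d, chainWt lam z p f = 1 := by
      intro f; unfold chainWt; simp
    rw [tsum_congr h1]
    rw [tsum_eq_single (fun i : Fin 0 => i.elim0) (fun b' hb' =>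
      absurd (funext fun i => i.elim0) (Ne.symm hb'))]
    simp
  | succ K ih =>
    intro p
    have he : ∑' f : Fin (K+1) → Blk d, chainWt lam z p f
        = ∑' q : Blk d × (Fin K → Blk d), chainWt lam z p (Fin.cons q.1 q.2) := by
      rw [← (Fin.consEquiv (fun _ : Fin (K+1) => Blk d)).tsum_eq (chainWt lam z p)]
      apply tsum_congr; intro q
      rfl
    rw [he, ENNReal.tsum_prod']
    have hstep : ∀ b : Blk d,
        (∑' g : Fin K → Blk d, chainWt lam z p (Fin.cons b g))
          ≤ blkWt lam z p.1 p.2 b *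
            (ENNReal.ofReal ((d : ℝ) * z * lam) * bubble d lam z) ^ K := by
      intro b
      have : ∀ g : Fin K → Blk d, chainWt lam z p (Fin.cons b g)
          = blkWt lam z p.1 p.2 b * chainWt lam z (stepAnch p b) g := fun g => chainWt_cons p b g
      rw [tsum_congr this, ENNReal.tsum_mul_left]
      exact mul_le_mul_right (ih (stepAnch p b)) _
    calc ∑' b : Blk d, ∑' g : Fin K → Blk d, chainWt lam z p (Fin.cons b g)
        ≤ ∑' b : Blk d, blkWt lam z p.1 p.2 b *
            (ENNReal.ofReal ((d : ℝ) * z * lam) * bubble d lam z) ^ K :=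
          ENNReal.tsum_le_tsum hstep
      _ = (∑' b : Blk d, blkWt lam z p.1 p.2 b) *
            (ENNReal.ofReal ((d : ℝ) * z * lam) * bubble d lam z) ^ K := by
          rw [ENNReal.tsum_mul_right]
      _ ≤ (ENNReal.ofReal ((d : ℝ) * z * lam) * bubble d lam z) *
            (ENNReal.ofReal ((d : ℝ) * z * lam) * bubble d lam z) ^ K :=
          mul_le_mul_left (blk_sum hd hlam0 hlam1 hz0 p.1 p.2) _
      _ = (ENNReal.ofReal ((d : ℝ) * z * lam) * bubble d lam z) ^ (K + 1) := by
          rw [pow_succ]; ring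

end BlockChain

section LaceStructure

/-- The increasing enumeration of the second coordinates of a lace. -/
def tIdx (L : Finset (ℕ × ℕ)) (i : ℕ) : ℕ :=
  ((L.image Prod.snd).sort (· ≤ ·)).getD i 0

/-- The first coordinate associated with `tIdx`. -/
def sIdx (L : Finset (ℕ × ℕ)) (i : ℕ) : ℕ := sOf L (tIdx L i)

/-- `t_{i-1}`, with the convention `t_{-1} = 0`. -/
def Tprev (L : Finset (ℕ × ℕ)) : ℕ → ℕ
  | 0 => 0
  | (i + 1) => tIdx L i

variable {b : ℕ} {L : Finset (ℕ × ℕ)}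

lemma lace_snd_injOn (hL : IsLace 0 b L) :
    ∀ e ∈ L, ∀ f ∈ L, e.2 = f.2 → e = f := by
  have key : ∀ e ∈ L, ∀ f ∈ L, e.2 = f.2 → e.1 < f.1 → False := by
    intro e he f hf hef hlt
    apply hL.2 f hf
    obtain ⟨h1, h2, h3, h4⟩ := hL.1
    have hne : e ≠ f := fun hc => by rw [hc] at hlt; omega
    refine ⟨fun g hg => h1 g (Finset.mem_of_mem_erase hg), ?_, ?_, ?_⟩
    · obtain ⟨e0, he0, he0a⟩ := h2
      refine ⟨e0, Finset.mem_erase.2 ⟨?_, he0⟩, he0a⟩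
      intro hc; rw [hc] at he0a; omega
    · obtain ⟨e1, he1, he1b⟩ := h3
      by_cases hc : e1 = f
      · exact ⟨e, Finset.mem_erase.2 ⟨hne, he⟩, by rw [hc] at he1b; omega⟩
      · exact ⟨e1, Finset.mem_erase.2 ⟨hc, he1⟩, he1b⟩
    · intro c hc1 hc2
      obtain ⟨e2, he2, h5, h6⟩ := h4 c hc1 hc2
      by_cases hc : e2 = f
      · rw [hc] at h5 h6
        exact ⟨e, Finset.mem_erase.2 ⟨hne, he⟩, by omega, by omega⟩
      · exact ⟨e2, Finset.mem_erase.2 ⟨hc, he2⟩, h5, h6⟩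
  intro e he f hf hef
  by_contra hne
  have hne1 : e.1 ≠ f.1 := fun h => hne (Prod.ext h hef)
  rcases lt_or_gt_of_ne hne1 with h | h
  · exact key e he f hf hef h
  · exact key f hf e he hef.symm h

lemma lace_fst_lt (hL : IsLace 0 b L) {e f : ℕ × ℕ} (he : e ∈ L) (hf : f ∈ L)
    (h : e.2 < f.2) : e.1 < f.1 := by
  by_contra hle
  push_neg at hle
  have hne : e ≠ f := fun hc => by rw [hc] at h; omega
  apply hL.2 e he
  obtain ⟨h1, h2, h3, h4⟩ := hL.1
  refine ⟨fun g hg => h1 g (Finset.mem_of_mem_erase hg), ?_, ?_, ?_⟩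
  · obtain ⟨e0, he0, he0a⟩ := h2
    by_cases hc : e0 = e
    · rw [hc] at he0a
      refine ⟨f, Finset.mem_erase.2 ⟨fun hcc => hne hcc.symm, hf⟩, by omega⟩
    · exact ⟨e0, Finset.mem_erase.2 ⟨hc, he0⟩, he0a⟩
  · obtain ⟨e1, he1, he1b⟩ := h3
    by_cases hc : e1 = e
    · exfalso
      rw [hc] at he1b
      have := (h1 f hf).2.2
      omega
    · exact ⟨e1, Finset.mem_erase.2 ⟨hc, he1⟩, he1b⟩
  · intro c hc1 hc2
    obtain ⟨e2, he2, h5, h6⟩ := h4 c hc1 hc2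
    by_cases hc : e2 = e
    · rw [hc] at h5 h6
      exact ⟨f, Finset.mem_erase.2 ⟨fun hcc => hne hcc.symm, hf⟩, by omega, by omega⟩
    · exact ⟨e2, Finset.mem_erase.2 ⟨hc, he2⟩, h5, h6⟩

lemma lace_sort_length (hL : IsLace 0 b L) :
    ((L.image Prod.snd).sort (· ≤ ·)).length = L.card := by
  rw [Finset.length_sort]
  exact Finset.card_image_of_injOn fun e he f hf h => lace_snd_injOn hL e he f hf h

lemma tIdx_edge (hL : IsLace 0 b L) {i : ℕ} (hi : i < L.card) :
    (sIdx L i, tIdx L i) ∈ L := by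
  have hlen := lace_sort_length hL
  have hmem : tIdx L i ∈ L.image Prod.snd := by
    unfold tIdx
    rw [List.getD_eq_getElem _ _ (by omega)]
    exact (Finset.mem_sort _).1 (List.getElem_mem _)
  obtain ⟨e, heL, he2⟩ := Finset.mem_image.1 hmem
  have hne : {s : ℕ | (s, tIdx L i) ∈ L}.Nonempty :=
    ⟨e.1, by show (e.1, tIdx L i) ∈ L; rw [show (e.1, tIdx L i) = e from Prod.ext rfl he2.symm]; exact heL⟩
  have := Nat.sInf_mem hne
  exact this

lemma tIdx_strictMono (hL : IsLace 0 b L) {i j : ℕ} (hij : i < j) (hj : j < L.card) :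
    tIdx L i < tIdx L j := by
  have hlen := lace_sort_length hL
  have hs := (Finset.sortedLT_sort (L.image Prod.snd)).pairwise
  unfold tIdx
  rw [List.getD_eq_getElem _ _ (by omega), List.getD_eq_getElem _ _ (by omega)]
  exact List.pairwise_iff_getElem.1 hs i j (by omega) (by omega) hij

lemma tIdx_mono (hL : IsLace 0 b L) {i j : ℕ} (hij : i ≤ j) (hj : j < L.card) :
    tIdx L i ≤ tIdx L j := by
  rcases Nat.eq_or_lt_of_le hij with h | h
  · rw [h]
  · exact le_of_lt (tIdx_strictMono hL h hj)

lemma lace_rep (hL : IsLace 0 b L) :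
    ∀ e ∈ L, ∃ i < L.card, e = (sIdx L i, tIdx L i) := by
  intro e he
  have hlen := lace_sort_length hL
  have hmem : e.2 ∈ (L.image Prod.snd).sort (· ≤ ·) :=
    (Finset.mem_sort _).2 (Finset.mem_image_of_mem _ he)
  obtain ⟨i, hi, hget⟩ := List.mem_iff_getElem.1 hmem
  refine ⟨i, by omega, ?_⟩
  have ht : tIdx L i = e.2 := by
    unfold tIdx; rw [List.getD_eq_getElem _ _ hi]; exact hget
  have hedge := tIdx_edge hL (show i < L.card by omega)
  exact lace_snd_injOn hL e he _ hedge (by rw [ht])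

lemma sIdx_strictMono (hL : IsLace 0 b L) {i j : ℕ} (hij : i < j) (hj : j < L.card) :
    sIdx L i < sIdx L j :=
  lace_fst_lt hL (tIdx_edge hL (lt_trans hij hj)) (tIdx_edge hL hj)
    (tIdx_strictMono hL hij hj)

lemma sIdx_mono (hL : IsLace 0 b L) {i j : ℕ} (hij : i ≤ j) (hj : j < L.card) :
    sIdx L i ≤ sIdx L j := by
  rcases Nat.eq_or_lt_of_le hij with h | h
  · rw [h]
  · exact le_of_lt (sIdx_strictMono hL h hj)

lemma sIdx_lt_tIdx (hL : IsLace 0 b L) {i : ℕ} (hi : i < L.card) :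
    sIdx L i < tIdx L i := (hL.1.1 _ (tIdx_edge hL hi)).2.1

lemma tIdx_le_b (hL : IsLace 0 b L) {i : ℕ} (hi : i < L.card) :
    tIdx L i ≤ b := (hL.1.1 _ (tIdx_edge hL hi)).2.2

lemma sIdx_zero (hL : IsLace 0 b L) (hN : 0 < L.card) : sIdx L 0 = 0 := by
  obtain ⟨e0, he0, he0a⟩ := hL.1.2.1
  obtain ⟨i, hi, hrep⟩ := lace_rep hL e0 he0
  have h1 : e0.1 = sIdx L i := by rw [hrep]
  rcases Nat.eq_zero_or_pos i with h0 | hpos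
  · rw [h0] at h1; omega
  · exfalso
    have h2 : sIdx L 0 < sIdx L i := sIdx_strictMono hL hpos hi
    omega

lemma tIdx_last (hL : IsLace 0 b L) (hN : 0 < L.card) : tIdx L (L.card - 1) = b := by
  obtain ⟨e1, he1, he1b⟩ := hL.1.2.2.1
  obtain ⟨i, hi, hrep⟩ := lace_rep hL e1 he1
  have h1 : tIdx L i ≤ tIdx L (L.card - 1) := tIdx_mono hL (by omega) (by omega)
  have h2 : tIdx L (L.card - 1) ≤ b := tIdx_le_b hL (by omega)
  have h3 : e1.2 = tIdx L i := by rw [hrep]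
  omega

lemma tIdx_pos (hL : IsLace 0 b L) (hN : 0 < L.card) {i : ℕ} (hi : i < L.card) :
    0 < tIdx L i := by
  have h1 : sIdx L 0 < tIdx L 0 := sIdx_lt_tIdx hL hN
  have h2 : tIdx L 0 ≤ tIdx L i := tIdx_mono hL (by omega) hi
  have h3 := sIdx_zero hL hN
  omega

lemma lace_conn (hL : IsLace 0 b L) {i : ℕ} (hi : i + 1 < L.card) :
    sIdx L (i + 1) < tIdx L i := by
  by_contra hle
  push_neg at hle
  have h0 : 0 < tIdx L i := tIdx_pos hL (by omega) (by omega)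
  have hlt : tIdx L i < b := by
    have h1 : tIdx L i < tIdx L (L.card - 1) := tIdx_strictMono hL (by omega) (by omega)
    have h2 := tIdx_last hL (by omega)
    omega
  obtain ⟨e2, he2, hc1, hc2⟩ := hL.1.2.2.2 (tIdx L i) h0 hlt
  obtain ⟨j, hj, hrep⟩ := lace_rep hL e2 he2
  have h3 : tIdx L i < tIdx L j := by
    have : e2.2 = tIdx L j := by rw [hrep]
    omega
  have h4 : i < j := by
    by_contra h
    push_neg at h
    have := tIdx_mono hL h (by omega)
    omega
  have h5 : sIdx L (i + 1) ≤ sIdx L j := sIdx_mono hL (by omega) hj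
  have h6 : e2.1 = sIdx L j := by rw [hrep]
  omega

lemma lace_sep (hL : IsLace 0 b L) {i : ℕ} (hi : i + 2 < L.card) :
    tIdx L i ≤ sIdx L (i + 2) := by
  by_contra hlt
  push_neg at hlt
  apply hL.2 (sIdx L (i + 1), tIdx L (i + 1)) (tIdx_edge hL (by omega))
  obtain ⟨h1, h2, h3, h4⟩ := hL.1
  refine ⟨fun g hg => h1 g (Finset.mem_of_mem_erase hg), ?_, ?_, ?_⟩
  · refine ⟨(sIdx L 0, tIdx L 0), Finset.mem_erase.2 ⟨?_, tIdx_edge hL (by omega)⟩,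
      sIdx_zero hL (by omega)⟩
    intro hc
    have hcc : tIdx L 0 = tIdx L (i + 1) := congrArg Prod.snd hc
    have := tIdx_strictMono hL (show 0 < i + 1 by omega) (show i + 1 < L.card by omega)
    omega
  · refine ⟨(sIdx L (L.card - 1), tIdx L (L.card - 1)),
      Finset.mem_erase.2 ⟨?_, tIdx_edge hL (by omega)⟩, tIdx_last hL (by omega)⟩
    intro hc
    have hcc : tIdx L (L.card - 1) = tIdx L (i + 1) := congrArg Prod.snd hc
    have := tIdx_strictMono hL (show i + 1 < L.card - 1 by omega) (by omega)
    omega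
  · intro c hc1 hc2
    obtain ⟨e2, he2, h5, h6⟩ := h4 c hc1 hc2
    by_cases hc : e2 = (sIdx L (i + 1), tIdx L (i + 1))
    · have h5' : sIdx L (i + 1) < c := by rw [hc] at h5; exact h5
      have h6' : c < tIdx L (i + 1) := by rw [hc] at h6; exact h6
      by_cases hcase : c < tIdx L i
      · refine ⟨(sIdx L i, tIdx L i), Finset.mem_erase.2 ⟨?_, tIdx_edge hL (by omega)⟩,
          ?_, hcase⟩
        · intro hcc
          have hcc2 : tIdx L i = tIdx L (i + 1) := congrArg Prod.snd hcc
          have := tIdx_strictMono hL ((show i < i + 1 by omega)) (show i + 1 < L.card by omega)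
          omega
        · have := sIdx_strictMono hL ((show i < i + 1 by omega)) (show i + 1 < L.card by omega)
          show sIdx L i < c
          omega
      · push_neg at hcase
        refine ⟨(sIdx L (i + 2), tIdx L (i + 2)),
          Finset.mem_erase.2 ⟨?_, tIdx_edge hL (by omega)⟩, ?_, ?_⟩
        · intro hcc
          have hcc2 : tIdx L (i + 2) = tIdx L (i + 1) := congrArg Prod.snd hcc
          have := tIdx_strictMono hL ((show i + 1 < i + 2 by omega)) (show i + 2 < L.card by omega)
          omega
        · show sIdx L (i + 2) < c
          omega
        · show c < tIdx L (i + 2)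
          have := tIdx_strictMono hL ((show i + 1 < i + 2 by omega)) (show i + 2 < L.card by omega)
          omega
    · exact ⟨e2, Finset.mem_erase.2 ⟨hc, he2⟩, h5, h6⟩

lemma lace_eq_image (hL : IsLace 0 b L) :
    L = (Finset.range L.card).image (fun i => (sIdx L i, tIdx L i)) := by
  apply Finset.Subset.antisymm
  · intro e he
    obtain ⟨i, hi, hrep⟩ := lace_rep hL e he
    exact Finset.mem_image.2 ⟨i, Finset.mem_range.2 hi, hrep.symm⟩
  · intro e he
    obtain ⟨i, hi, hrep⟩ := Finset.mem_image.1 he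
    rw [← hrep]
    exact tIdx_edge hL (Finset.mem_range.1 hi)

end LaceStructure

section Compat

variable {b : ℕ} {L : Finset (ℕ × ℕ)}

lemma Tprev_succ_eq (L : Finset (ℕ × ℕ)) {i : ℕ} (hi : 1 ≤ i) :
    Tprev L i = tIdx L (i - 1) := by
  cases i with
  | zero => omega
  | succ k => simp [Tprev]

lemma interior_not_mem (hL : IsLace 0 b L) {i : ℕ} (hi : i < L.card) {e : ℕ × ℕ}
    (he1 : Tprev L i ≤ e.1) (he2 : e.1 < e.2) (he3 : e.2 < tIdx L i) : e ∉ L := by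
  intro heL
  obtain ⟨j, hj, hrep⟩ := lace_rep hL e heL
  have hrep2 : e.2 = tIdx L j := by rw [hrep]
  have hji : j < i := by
    by_contra h; push_neg at h
    have := tIdx_mono hL h hj
    omega
  have hT := Tprev_succ_eq L (show 1 ≤ i by omega)
  have h2 : tIdx L j ≤ tIdx L (i - 1) := tIdx_mono hL (by omega) (by omega)
  omega

lemma tSeq_insert (hL : IsLace 0 b L) (hN : 0 < L.card)
    {i : ℕ} (hi : i < L.card) {e : ℕ × ℕ}
    (he1 : Tprev L i ≤ e.1) (he2 : e.1 < e.2) (he3 : e.2 < tIdx L i) :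
    ∀ k, tSeq 0 (insert e L) k = tIdx L (min k (L.card - 1)) := by
  intro k
  induction k with
  | zero =>
    show (Finset.filter (fun f => f.1 = 0) (insert e L)).sup Prod.snd
        = tIdx L (min 0 (L.card - 1))
    have hmin : min 0 (L.card - 1) = 0 := by omega
    rw [hmin]
    apply le_antisymm
    · apply Finset.sup_le
      intro f hf
      rw [Finset.mem_filter, Finset.mem_insert] at hf
      obtain ⟨hmem, hf0⟩ := hf
      rcases hmem with rfl | hfL
      · have hizero : i = 0 := by
          by_contra h
          have hT := Tprev_succ_eq L (show 1 ≤ i by omega)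
          have := tIdx_pos hL hN (show i - 1 < L.card by omega)
          omega
        have htt : tIdx L i = tIdx L 0 := by rw [hizero]
        omega
      · obtain ⟨j, hj, hrep⟩ := lace_rep hL f hfL
        have h1 : f.1 = sIdx L j := by rw [hrep]
        have h2 : f.2 = tIdx L j := by rw [hrep]
        have hj0 : j = 0 := by
          by_contra h
          have := sIdx_strictMono hL (show 0 < j by omega) hj
          have := sIdx_zero hL hN
          omega
        rw [hj0] at h2
        omega
    · have hmem : (sIdx L 0, tIdx L 0) ∈ Finset.filter (fun f => f.1 = 0) (insert e L) := by
        rw [Finset.mem_filter, Finset.mem_insert]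
        exact ⟨Or.inr (tIdx_edge hL hN), sIdx_zero hL hN⟩
      exact Finset.le_sup (f := Prod.snd) hmem
  | succ k ih =>
    show (Finset.filter (fun f => f.1 < tSeq 0 (insert e L) k) (insert e L)).sup Prod.snd = _
    rw [ih]
    have hm : min k (L.card - 1) < L.card := by omega
    have hm'eq : min (k + 1) (L.card - 1) = min (min k (L.card - 1) + 1) (L.card - 1) := by
      omega
    rw [hm'eq]
    set m := min k (L.card - 1) with hmdef
    set m' := min (m + 1) (L.card - 1) with hm'def
    have hm'lt : m' < L.card := by omega
    apply le_antisymm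
    · apply Finset.sup_le
      intro f hf
      rw [Finset.mem_filter, Finset.mem_insert] at hf
      obtain ⟨hmem, hflt⟩ := hf
      rcases hmem with rfl | hfL
      · by_cases hcase : i ≤ m
        · have h1 : tIdx L i ≤ tIdx L m := tIdx_mono hL hcase hm
          have h2 : tIdx L m ≤ tIdx L m' := tIdx_mono hL (by omega) hm'lt
          omega
        · exfalso
          push_neg at hcase
          have hT := Tprev_succ_eq L (show 1 ≤ i by omega)
          have h1 : tIdx L m ≤ tIdx L (i - 1) := tIdx_mono hL (by omega) (by omega)
          omega
      · obtain ⟨j, hj, hrep⟩ := lace_rep hL f hfL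
        have h1 : f.1 = sIdx L j := by rw [hrep]
        have h2 : f.2 = tIdx L j := by rw [hrep]
        have hjm : j ≤ m' := by
          by_contra h
          push_neg at h
          have hm'm : m' = m + 1 := by omega
          have hsep : tIdx L m ≤ sIdx L (m + 2) := lace_sep hL (by omega)
          have hmono : sIdx L (m + 2) ≤ sIdx L j := sIdx_mono hL (by omega) hj
          omega
        have := tIdx_mono hL hjm hm'lt
        omega
    · have hmem : (sIdx L m', tIdx L m')
          ∈ Finset.filter (fun f => f.1 < tIdx L m) (insert e L) := by
        rw [Finset.mem_filter, Finset.mem_insert]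
        refine ⟨Or.inr (tIdx_edge hL hm'lt), ?_⟩
        show sIdx L m' < tIdx L m
        by_cases hcase : m' = m + 1
        · rw [hcase]
          exact lace_conn hL (by omega)
        · have hmm : m' = m := by omega
          rw [hmm]
          exact sIdx_lt_tIdx hL hm
      exact Finset.le_sup (f := Prod.snd) hmem

lemma sOf_insert (hL : IsLace 0 b L)
    {i : ℕ} (hi : i < L.card) {e : ℕ × ℕ}
    (he1 : Tprev L i ≤ e.1) (he2 : e.1 < e.2) (he3 : e.2 < tIdx L i)
    {j : ℕ} (hj : j < L.card) :
    sOf (insert e L) (tIdx L j) = sIdx L j := by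
  have hmem : (sIdx L j, tIdx L j) ∈ insert e L := Finset.mem_insert_of_mem (tIdx_edge hL hj)
  have hne : {s : ℕ | (s, tIdx L j) ∈ insert e L}.Nonempty := ⟨sIdx L j, hmem⟩
  have hinf' : (sOf (insert e L) (tIdx L j), tIdx L j) ∈ insert e L := Nat.sInf_mem hne
  have hle : sOf (insert e L) (tIdx L j) ≤ sIdx L j := Nat.sInf_le hmem
  rcases Finset.mem_insert.1 hinf' with hcase | hcase
  · exfalso
    have h2 : e.2 = tIdx L j := by rw [← hcase]
    have hji : j < i := by
      by_contra h; push_neg at h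
      have := tIdx_mono hL h hj
      omega
    have hT := Tprev_succ_eq L (show 1 ≤ i by omega)
    have h3 : tIdx L j ≤ tIdx L (i - 1) := tIdx_mono hL (by omega) (by omega)
    omega
  · obtain ⟨kk, hkk, hrep⟩ := lace_rep hL _ hcase
    have h1 : tIdx L j = tIdx L kk := congrArg Prod.snd hrep
    have h0 : sOf (insert e L) (tIdx L j) = sIdx L kk := congrArg Prod.fst hrep
    have hkj : kk = j := by
      rcases lt_trichotomy kk j with h | h | h
      · have := tIdx_strictMono hL h hj; omega
      · exact h
      · have := tIdx_strictMono hL h hkk; omega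
    rw [h0, hkj]

lemma laceOf_insert (hL : IsLace 0 b L) (hN : 0 < L.card)
    {i : ℕ} (hi : i < L.card) {e : ℕ × ℕ}
    (he1 : Tprev L i ≤ e.1) (he2 : e.1 < e.2) (he3 : e.2 < tIdx L i) :
    laceOf 0 (insert e L) = L := by
  unfold laceOf
  apply Finset.Subset.antisymm
  · intro f hf
    obtain ⟨k, hk, hrep⟩ := Finset.mem_image.1 hf
    rw [← hrep, tSeq_insert hL hN hi he1 he2 he3 k,
      sOf_insert hL hi he1 he2 he3 (show min k (L.card - 1) < L.card by omega)]
    exact tIdx_edge hL (by omega)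
  · intro f hf
    obtain ⟨j, hj, hrep⟩ := lace_rep hL f hf
    apply Finset.mem_image.2
    refine ⟨j, Finset.mem_range.2 ?_, ?_⟩
    · rw [Finset.card_insert_of_notMem (interior_not_mem hL hi he1 he2 he3)]
      omega
    · rw [tSeq_insert hL hN hi he1 he2 he3 j]
      have hmin : min j (L.card - 1) = j := by omega
      rw [hmin, sOf_insert hL hi he1 he2 he3 hj, ← hrep]

lemma interior_mem_compat (hL : IsLace 0 b L) (hN : 0 < L.card)
    {i : ℕ} (hi : i < L.card) {e : ℕ × ℕ}
    (he1 : Tprev L i ≤ e.1) (he2 : e.1 < e.2) (he3 : e.2 < tIdx L i) :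
    e ∈ compat 0 b L := by
  have hnotmem := interior_not_mem hL hi he1 he2 he3
  have hb : tIdx L i ≤ b := tIdx_le_b hL hi
  unfold compat
  rw [Finset.mem_filter]
  refine ⟨?_, ⟨by omega, he2, by omega⟩, hnotmem, laceOf_insert hL hN hi he1 he2 he3⟩
  rw [Finset.mem_product, Finset.mem_range, Finset.mem_range]
  omega

end Compat

section Blocks

variable {d b N : ℕ} {x : Pt d} {L : Finset (ℕ × ℕ)} {w : ℕ → Pt d} {lam z : ℝ}

/-- Right endpoint of the first subwalk of block `i`. -/
def QIdx (L : Finset (ℕ × ℕ)) (i : ℕ) : ℕ :=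
  if i + 1 < L.card then sIdx L (i + 1) else tIdx L i - 1

lemma Tprev_le_QIdx (hL : IsLace 0 b L) {i : ℕ} (hi : i < L.card) :
    Tprev L i ≤ QIdx L i := by
  unfold QIdx
  split
  · rename_i hsplit
    cases i with
    | zero => simp [Tprev]
    | succ k =>
      show tIdx L k ≤ sIdx L (k + 2)
      exact lace_sep hL (by omega)
  · cases i with
    | zero => simp [Tprev]
    | succ k =>
      have := tIdx_strictMono hL (show k < k + 1 by omega) hi
      show tIdx L k ≤ tIdx L (k + 1) - 1
      omega

lemma QIdx_le (hL : IsLace 0 b L) {i : ℕ} (hi : i < L.card) :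
    QIdx L i ≤ tIdx L i - 1 := by
  unfold QIdx
  split
  · rename_i hsplit
    have := lace_conn hL hsplit
    omega
  · exact le_refl _

/-- The `i`-th block of the chain decomposition associated with a walk and a lace. -/
def mkBlock (hw : IsWalk b 0 x w) (hL : IsLace 0 b L) (hN : 0 < L.card)
    (hU : ∀ e ∈ L, ∃ m : ℕ, w e.1 - w e.2 = (m : ℤ) • (w e.2 - w (e.2 - 1)))
    (i : ℕ) (hi : i < L.card) : Blk d :=
  ⟨⟨(QIdx L i - Tprev L i, w (QIdx L i) - w (Tprev L i)),
     trunc w (Tprev L i) (QIdx L i - Tprev L i),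
     trunc_isWalk hw (Tprev_le_QIdx hL hi)
       (by have h1 := QIdx_le hL hi; have h2 := tIdx_le_b hL hi; omega)⟩,
   ⟨⟨(tIdx L i - 1 - QIdx L i, w (tIdx L i - 1) - w (QIdx L i)),
     trunc w (QIdx L i) (tIdx L i - 1 - QIdx L i),
     trunc_isWalk hw (QIdx_le hL hi)
       (by have h2 := tIdx_le_b hL hi; omega)⟩,
   (hU _ (tIdx_edge hL hi)).choose,
   ⟨w (tIdx L i) - w (tIdx L i - 1), by
      have hpos := tIdx_pos hL hN hi
      have hlb := tIdx_le_b hL hi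
      have hstep := hw.2.2 (tIdx L i - 1) (by omega)
      have harg : tIdx L i - 1 + 1 = tIdx L i := by omega
      rw [harg] at hstep
      exact hstep⟩⟩⟩

lemma ofFn_take_succ {α : Type*} {N : ℕ} (f : Fin N → α) {i : ℕ} (hi : i < N) :
    (List.ofFn f).take (i + 1) = (List.ofFn f).take i ++ [f ⟨i, hi⟩] := by
  rw [List.take_succ]
  congr
  rw [List.getElem?_eq_getElem (by simpa using hi)]
  simp

lemma anch_append {d : ℕ} (p : Pt d × Pt d) (l : List (Blk d)) (a : Blk d) :
    anch p (l ++ [a]) = stepAnch (anch p l) a := by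
  unfold anch
  rw [List.foldl_append]
  rfl

lemma lace_cover (hL : IsLace 0 b L) :
    ∀ k, k < L.card → ∀ j, j ≤ tIdx L k →
      ∃ i, i < L.card ∧ Tprev L i ≤ j ∧ j ≤ tIdx L i := by
  intro k
  induction k with
  | zero =>
    intro hk j hj
    exact ⟨0, hk, by simp [Tprev], hj⟩
  | succ k ih =>
    intro hk j hj
    by_cases hc : j ≤ tIdx L k
    · exact ih (by omega) j hc
    · refine ⟨k + 1, hk, ?_, hj⟩
      show tIdx L k ≤ j
      omega

lemma lacesN_spec {b N : ℕ} {L : Finset (ℕ × ℕ)} (h : L ∈ lacesN 0 b N) :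
    IsLace 0 b L ∧ L.card = N := by
  unfold lacesN at h
  rw [Finset.mem_filter] at h
  exact h.2

lemma stepAnch_mkBlock (hw : IsWalk b 0 x w) (hL : IsLace 0 b L) (hN : 0 < L.card)
    (hU : ∀ e ∈ L, ∃ m : ℕ, w e.1 - w e.2 = (m : ℤ) • (w e.2 - w (e.2 - 1)))
    (i : ℕ) (hi : i < L.card) (pp yy : Pt d) :
    stepAnch (pp, yy) (mkBlock hw hL hN hU i hi)
      = (pp + (w (QIdx L i) - w (Tprev L i)) + (w (tIdx L i - 1) - w (QIdx L i))
          + (w (tIdx L i) - w (tIdx L i - 1)),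
         pp + (w (QIdx L i) - w (Tprev L i))) := rfl

/-- Anchors of the block decomposition are the walk values at the breakpoints. -/
lemma anch_eval (hw : IsWalk b 0 x w) (hL : IsLace 0 b L) (hN0 : 0 < N)
    (hcard : L.card = N)
    (hU : ∀ e ∈ L, ∃ m : ℕ, w e.1 - w e.2 = (m : ℤ) • (w e.2 - w (e.2 - 1))) :
    ∀ i, i < N →
      anch ((0 : Pt d), (0 : Pt d))
        ((List.ofFn (fun k : Fin N =>
          mkBlock hw hL (by omega) hU k.1 (by omega : k.1 < L.card))).take i)
        = (w (Tprev L i), w (sIdx L i)) := by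
  intro i
  induction i with
  | zero =>
    intro _
    show ((0 : Pt d), (0 : Pt d)) = (w (Tprev L 0), w (sIdx L 0))
    have h1 : Tprev L 0 = 0 := rfl
    have h2 := sIdx_zero hL (by omega)
    rw [h1, h2, hw.1]
  | succ i ih =>
    intro hi
    rw [ofFn_take_succ _ (show i < N by omega), anch_append, ih (by omega)]
    show stepAnch (w (Tprev L i), w (sIdx L i))
        (mkBlock hw hL (by omega) hU i (by omega)) = (w (Tprev L (i + 1)), w (sIdx L (i + 1)))
    rw [stepAnch_mkBlock]
    have hQ : QIdx L i = sIdx L (i + 1) := by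
      unfold QIdx
      rw [if_pos (by omega)]
    have hT1 : Tprev L (i + 1) = tIdx L i := rfl
    rw [hQ, hT1]
    have h1 : w (Tprev L i) + (w (sIdx L (i + 1)) - w (Tprev L i))
        + (w (tIdx L i - 1) - w (sIdx L (i + 1))) + (w (tIdx L i) - w (tIdx L i - 1))
        = w (tIdx L i) := by abel
    have h2 : w (Tprev L i) + (w (sIdx L (i + 1)) - w (Tprev L i)) = w (sIdx L (i + 1)) := by
      abel
    rw [h1, h2]

end Blocks

section Pointwise

variable {d b N : ℕ} {x : Pt d} {L : Finset (ℕ × ℕ)} {w : ℕ → Pt d} {lam z : ℝ}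

lemma blkWt_mkBlock (hlam0 : 0 ≤ lam) (hlam1 : lam ≤ 1)
    (hw : IsWalk b 0 x w) (hL : IsLace 0 b L) (hN : 0 < L.card)
    (hU : ∀ e ∈ L, ∃ m : ℕ, w e.1 - w e.2 = (m : ℤ) • (w e.2 - w (e.2 - 1)))
    (i : ℕ) (hi : i < L.card) :
    blkWt lam z (w (Tprev L i)) (w (sIdx L i)) (mkBlock hw hL hN hU i hi)
      = ENNReal.ofReal (z ^ (QIdx L i - Tprev L i)
            * edgeProd lam (edgesIn (Tprev L i) (QIdx L i)) w)
        * (ENNReal.ofReal (z ^ (tIdx L i - 1 - QIdx L i)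
            * edgeProd lam (edgesIn (QIdx L i) (tIdx L i - 1)) w)
        * ENNReal.ofReal (z * lam)) := by
  have hcs : w (sIdx L i) - w (tIdx L i)
      = ((hU _ (tIdx_edge hL hi)).choose : ℤ) • (w (tIdx L i) - w (tIdx L i - 1)) :=
    (hU _ (tIdx_edge hL hi)).choose_spec
  have hcond : w (Tprev L i) + (w (QIdx L i) - w (Tprev L i))
      + (w (tIdx L i - 1) - w (QIdx L i))
      + (((hU _ (tIdx_edge hL hi)).choose : ℤ) + 1) • (w (tIdx L i) - w (tIdx L i - 1))
      = w (sIdx L i) := by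
    rw [add_smul, one_smul, ← hcs]
    abel
  have hphi1 := phi_trunc (lam := lam) w (Tprev_le_QIdx hL hi)
  have hphi2 := phi_trunc (lam := lam) w (QIdx_le hL hi)
  show ENNReal.ofReal (z ^ (QIdx L i - Tprev L i)
        * phi lam (QIdx L i - Tprev L i) (trunc w (Tprev L i) (QIdx L i - Tprev L i)))
      * (ENNReal.ofReal (z ^ (tIdx L i - 1 - QIdx L i)
        * phi lam (tIdx L i - 1 - QIdx L i) (trunc w (QIdx L i) (tIdx L i - 1 - QIdx L i)))
      * (ENNReal.ofReal (z * lam) *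
        (if w (Tprev L i) + (w (QIdx L i) - w (Tprev L i))
            + (w (tIdx L i - 1) - w (QIdx L i))
            + (((hU _ (tIdx_edge hL hi)).choose : ℤ) + 1) • (w (tIdx L i) - w (tIdx L i - 1))
            = w (sIdx L i) then (1 : ℝ≥0∞) else 0))) = _
  rw [if_pos hcond, mul_one, hphi1, hphi2]

/-- The real-valued weight of block `k`. -/
def Hfun (lam z : ℝ) {d : ℕ} (L : Finset (ℕ × ℕ)) (w : ℕ → Pt d) (k : ℕ) : ℝ :=
  z ^ (QIdx L k - Tprev L k) * edgeProd lam (edgesIn (Tprev L k) (QIdx L k)) w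
    * (z ^ (tIdx L k - 1 - QIdx L k)
        * edgeProd lam (edgesIn (QIdx L k) (tIdx L k - 1)) w * (z * lam))

lemma pointwise_bound (hlam0 : 0 < lam) (hlam1 : lam ≤ 1) (hz0 : 0 ≤ z)
    (hN : 0 < N) (hw : IsWalk b 0 x w) (hL : IsLace 0 b L) (hcard : L.card = N)
    (hU : ∀ e ∈ L, ∃ m : ℕ, w e.1 - w e.2 = (m : ℤ) • (w e.2 - w (e.2 - 1))) :
    ENNReal.ofReal (z ^ b) * ENNReal.ofReal (laceProd lam b L w)
      ≤ chainWt lam z ((0 : Pt d), (0 : Pt d))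
          (fun k : Fin N => mkBlock hw hL (by omega) hU k.1 (by omega : k.1 < L.card)) := by
  classical
  -- chain weight computation
  have hchain : chainWt lam z ((0 : Pt d), (0 : Pt d))
      (fun k : Fin N => mkBlock hw hL (by omega) hU k.1 (by omega : k.1 < L.card))
      = ∏ k ∈ Finset.range N, ENNReal.ofReal (Hfun lam z L w k) := by
    unfold chainWt
    rw [← Fin.prod_univ_eq_prod_range (fun k => ENNReal.ofReal (Hfun lam z L w k)) N]
    apply Finset.prod_congr rfl
    intro k _
    rw [anch_eval hw hL hN hcard hU k.1 k.2]
    have hblk := blkWt_mkBlock (z := z) hlam0.le hlam1 hw hL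
      (by omega : 0 < L.card) hU k.1 (by omega : k.1 < L.card)
    refine hblk.trans ?_
    unfold Hfun
    rw [ENNReal.ofReal_mul (mul_nonneg (pow_nonneg hz0 _)
        (edgeProd_nonneg hlam0.le hlam1 _ w)),
      ENNReal.ofReal_mul (mul_nonneg (pow_nonneg hz0 _)
        (edgeProd_nonneg hlam0.le hlam1 _ w))]
  rw [hchain]
  -- nonnegativity facts
  have hE1 : ∀ k, 0 ≤ edgeProd lam (edgesIn (Tprev L k) (QIdx L k)) w :=
    fun k => edgeProd_nonneg hlam0.le hlam1 _ w
  have hE2 : ∀ k, 0 ≤ edgeProd lam (edgesIn (QIdx L k) (tIdx L k - 1)) w :=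
    fun k => edgeProd_nonneg hlam0.le hlam1 _ w
  have hHnn : ∀ k, 0 ≤ Hfun lam z L w k := by
    intro k
    unfold Hfun
    have := hE1 k; have := hE2 k
    positivity
  -- lace factor
  have hUeq : ∀ e ∈ L, U w e.1 e.2 = -1 := by
    intro e he
    unfold U
    rw [if_pos (hU e he)]
  have hlace : (∏ e ∈ L, (-(lam * U w e.1 e.2))) = lam ^ N := by
    have h1 : ∀ e ∈ L, -(lam * U w e.1 e.2) = lam := fun e he => by rw [hUeq e he]; ring
    rw [Finset.prod_congr rfl h1, Finset.prod_const, hcard]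
  -- subset into compat
  have hbounds : ∀ k, k < N → ∀ e ∈ (edgesIn (Tprev L k) (QIdx L k)
      ∪ edgesIn (QIdx L k) (tIdx L k - 1)),
      Tprev L k ≤ e.1 ∧ e.1 < e.2 ∧ e.2 ≤ tIdx L k - 1 := by
    intro k hk e he
    have hq := QIdx_le hL (show k < L.card by omega)
    have ht := Tprev_le_QIdx hL (show k < L.card by omega)
    rcases Finset.mem_union.1 he with h | h <;> rw [mem_edgesIn] at h <;> omega
  have hEsub : ((Finset.range N).biUnion fun k => edgesIn (Tprev L k) (QIdx L k)
      ∪ edgesIn (QIdx L k) (tIdx L k - 1)) ⊆ compat 0 b L := by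
    apply Finset.biUnion_subset.2
    intro k hk e he
    rw [Finset.mem_range] at hk
    obtain ⟨h1, h2, h3⟩ := hbounds k hk e he
    have hpos := tIdx_pos hL (by omega) (show k < L.card by omega)
    exact interior_mem_compat hL (by omega) (show k < L.card by omega) h1 h2 (by omega)
  -- pairwise disjointness
  have hpd : (↑(Finset.range N) : Set ℕ).PairwiseDisjoint
      (fun k => edgesIn (Tprev L k) (QIdx L k) ∪ edgesIn (QIdx L k) (tIdx L k - 1)) := by
    have hkey : ∀ i' j', i' < j' → j' < N →
        Disjoint (edgesIn (Tprev L i') (QIdx L i') ∪ edgesIn (QIdx L i') (tIdx L i' - 1))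
          (edgesIn (Tprev L j') (QIdx L j') ∪ edgesIn (QIdx L j') (tIdx L j' - 1)) := by
      intro i' j' hlt hj'
      rw [Finset.disjoint_left]
      intro e he1 he2
      obtain ⟨a1, a2, a3⟩ := hbounds i' (by omega) e he1
      obtain ⟨b1, b2, b3⟩ := hbounds j' (by omega) e he2
      have hTj : Tprev L j' = tIdx L (j' - 1) := Tprev_succ_eq L (by omega)
      have := tIdx_mono hL (show i' ≤ j' - 1 by omega) (show j' - 1 < L.card by omega)
      omega
    intro i hi j hj hij
    rw [Finset.mem_coe, Finset.mem_range] at hi hj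
    rcases lt_or_gt_of_ne hij with h | h
    · exact hkey i j h hj
    · exact (hkey j i h hi).symm
  -- product bound over compat
  have hprod : edgeProd lam (compat 0 b L) w
      ≤ ∏ k ∈ Finset.range N, (edgeProd lam (edgesIn (Tprev L k) (QIdx L k)) w
          * edgeProd lam (edgesIn (QIdx L k) (tIdx L k - 1)) w) := by
    refine (edgeProd_le_of_subset hlam0.le hlam1 hEsub w).trans ?_
    unfold edgeProd
    rw [Finset.prod_biUnion hpd]
    apply le_of_eq
    apply Finset.prod_congr rfl
    intro k _
    rw [Finset.prod_union (edgesIn_disjoint (le_refl (QIdx L k)))]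
  -- telescoping for the power of z
  have htel : ∀ K, K ≤ N →
      (∑ k ∈ Finset.range K,
        ((QIdx L k - Tprev L k) + (tIdx L k - 1 - QIdx L k) + 1)) = Tprev L K := by
    intro K
    induction K with
    | zero => intro _; simp [Tprev]
    | succ K ih =>
      intro hK
      rw [Finset.sum_range_succ, ih (by omega)]
      have h1 := Tprev_le_QIdx hL (show K < L.card by omega)
      have h2 := QIdx_le hL (show K < L.card by omega)
      have h3 := tIdx_pos hL (by omega) (show K < L.card by omega)
      show _ = tIdx L K
      omega
  have hb_eq : Tprev L N = b := by
    have h1 : Tprev L N = tIdx L (N - 1) := Tprev_succ_eq L (by omega)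
    rw [h1, show N - 1 = L.card - 1 by omega]
    exact tIdx_last hL (by omega)
  have hzpow : z ^ b = ∏ k ∈ Finset.range N,
      z ^ ((QIdx L k - Tprev L k) + (tIdx L k - 1 - QIdx L k) + 1) := by
    rw [Finset.prod_pow_eq_pow_sum, htel N le_rfl, hb_eq]
  -- the real inequality
  have hreal : z ^ b * laceProd lam b L w ≤ ∏ k ∈ Finset.range N, Hfun lam z L w k := by
    have hRHS : ∏ k ∈ Finset.range N, Hfun lam z L w k
        = (z ^ b * lam ^ N) * ∏ k ∈ Finset.range N,
            (edgeProd lam (edgesIn (Tprev L k) (QIdx L k)) w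
              * edgeProd lam (edgesIn (QIdx L k) (tIdx L k - 1)) w) := by
      have hfac : ∀ k ∈ Finset.range N, Hfun lam z L w k
          = (z ^ ((QIdx L k - Tprev L k) + (tIdx L k - 1 - QIdx L k) + 1) * lam)
            * (edgeProd lam (edgesIn (Tprev L k) (QIdx L k)) w
              * edgeProd lam (edgesIn (QIdx L k) (tIdx L k - 1)) w) := by
        intro k _
        unfold Hfun
        rw [pow_add, pow_add, pow_one]
        ring
      rw [Finset.prod_congr rfl hfac, Finset.prod_mul_distrib, Finset.prod_mul_distrib,
        Finset.prod_const, Finset.card_range, ← hzpow]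
    rw [hRHS]
    have hstep1 : laceProd lam b L w = lam ^ N * edgeProd lam (compat 0 b L) w := by
      unfold laceProd edgeProd
      rw [hlace]
    rw [hstep1]
    calc z ^ b * (lam ^ N * edgeProd lam (compat 0 b L) w)
        = (z ^ b * lam ^ N) * edgeProd lam (compat 0 b L) w := by ring
      _ ≤ (z ^ b * lam ^ N) * ∏ k ∈ Finset.range N,
            (edgeProd lam (edgesIn (Tprev L k) (QIdx L k)) w
              * edgeProd lam (edgesIn (QIdx L k) (tIdx L k - 1)) w) := by
          apply mul_le_mul_of_nonneg_left hprod (by positivity)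
  calc ENNReal.ofReal (z ^ b) * ENNReal.ofReal (laceProd lam b L w)
      = ENNReal.ofReal (z ^ b * laceProd lam b L w) :=
        (ENNReal.ofReal_mul (by positivity)).symm
    _ ≤ ENNReal.ofReal (∏ k ∈ Finset.range N, Hfun lam z L w k) :=
        ENNReal.ofReal_le_ofReal hreal
    _ = ∏ k ∈ Finset.range N, ENNReal.ofReal (Hfun lam z L w k) :=
        ENNReal.ofReal_prod_of_nonneg (fun k _ => hHnn k)

end Pointwise

section Assembly

/-- The index type collecting endpoint, length, walk and lace. -/
abbrev Sig (d N : ℕ) := Σ (x : Pt d) (n : ℕ),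
  Walks d (n + 1) 0 x × {L : Finset (ℕ × ℕ) // L ∈ lacesN 0 (n + 1) N}

/-- The summand of `Σ_x Π_z^{(N)}(x)` indexed over `Sig`. -/
def gfun (d : ℕ) (lam z : ℝ) (N : ℕ) (σ : Sig d N) : ℝ≥0∞ :=
  ENNReal.ofReal (z ^ (σ.2.1 + 1)) *
    ENNReal.ofReal (laceProd lam (σ.2.1 + 1) σ.2.2.2.1 σ.2.2.1.1)

variable {d N : ℕ} {lam z : ℝ}

lemma tsum_PiN_eq :
    ∑' x : Pt d, PiN d lam z N x = ∑' σ : Sig d N, gfun d lam z N σ := by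
  have hstep : ∀ (x : Pt d) (n : ℕ),
      ENNReal.ofReal (z ^ (n + 1)) * ∑' w : Walks d (n + 1) 0 x,
          ∑ L ∈ lacesN 0 (n + 1) N, ENNReal.ofReal (laceProd lam (n + 1) L w.1)
        = ∑' w : Walks d (n + 1) 0 x, ∑' Ls : {L : Finset (ℕ × ℕ) // L ∈ lacesN 0 (n + 1) N},
            ENNReal.ofReal (z ^ (n + 1)) * ENNReal.ofReal (laceProd lam (n + 1) Ls.1 w.1) := by
    intro x n
    rw [← ENNReal.tsum_mul_left]
    apply tsum_congr; intro w
    rw [← Finset.tsum_subtype' (lacesN 0 (n + 1) N)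
      (fun L => ENNReal.ofReal (laceProd lam (n + 1) L w.1)), ENNReal.tsum_mul_left]
    rfl
  calc ∑' x : Pt d, PiN d lam z N x
      = ∑' x : Pt d, ∑' n : ℕ, ∑' w : Walks d (n + 1) 0 x,
          ∑' Ls : {L : Finset (ℕ × ℕ) // L ∈ lacesN 0 (n + 1) N},
            ENNReal.ofReal (z ^ (n + 1)) * ENNReal.ofReal (laceProd lam (n + 1) Ls.1 w.1) := by
        apply tsum_congr; intro x
        unfold PiN
        apply tsum_congr; intro n
        exact hstep x n
    _ = ∑' σ : Sig d N, gfun d lam z N σ := by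
        symm
        rw [ENNReal.tsum_sigma']
        apply tsum_congr; intro x
        rw [ENNReal.tsum_sigma']
        apply tsum_congr; intro n
        rw [ENNReal.tsum_prod']
        apply tsum_congr; intro w
        apply tsum_congr; intro Ls
        rfl

lemma support_hU (hlam0 : 0 < lam) {σ : Sig d N} (hσ : gfun d lam z N σ ≠ 0) :
    ∀ e ∈ σ.2.2.2.1, ∃ m : ℕ,
      σ.2.2.1.1 e.1 - σ.2.2.1.1 e.2 = (m : ℤ) • (σ.2.2.1.1 e.2 - σ.2.2.1.1 (e.2 - 1)) := by
  intro e he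
  have h1 : laceProd lam (σ.2.1 + 1) σ.2.2.2.1 σ.2.2.1.1 ≠ 0 := by
    intro hc
    apply hσ
    unfold gfun
    rw [hc]
    simp
  have h2 : (∏ e ∈ σ.2.2.2.1, (-(lam * U σ.2.2.1.1 e.1 e.2))) ≠ 0 := by
    intro hc
    apply h1
    unfold laceProd
    rw [hc, zero_mul]
  have h3 := Finset.prod_ne_zero_iff.1 h2 e he
  have h4 : U σ.2.2.1.1 e.1 e.2 ≠ 0 := by
    intro hc
    apply h3
    rw [hc]
    ring
  exact U_exists_of_ne h4

/-- The embedding of the support of `gfun` into chains of blocks. -/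
def iota (hlam0 : 0 < lam) (hN : 0 < N) (σ : Sig d N) (hσ : gfun d lam z N σ ≠ 0) :
    Fin N → Blk d :=
  fun k => mkBlock σ.2.2.1.2 (lacesN_spec σ.2.2.2.2).1
    (by rw [(lacesN_spec σ.2.2.2.2).2]; exact hN)
    (support_hU hlam0 hσ) k.1 (by rw [(lacesN_spec σ.2.2.2.2).2]; exact k.2)

lemma iota_injective (hlam0 : 0 < lam) (hN : 0 < N) :
    Function.Injective fun σ : ↥(Function.support (gfun d lam z N)) =>
      iota hlam0 hN σ.1 (Function.mem_support.1 σ.2) := by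
  rintro ⟨⟨x, n, w, Ls⟩, hs⟩ ⟨⟨x', n', w', Ls'⟩, hs'⟩ h
  simp only at h
  have hL := (lacesN_spec Ls.2).1
  have hcard := (lacesN_spec Ls.2).2
  have hL' := (lacesN_spec Ls'.2).1
  have hcard' := (lacesN_spec Ls'.2).2
  -- component extraction
  have hlen1 : ∀ i (hi : i < N),
      QIdx Ls.1 i - Tprev Ls.1 i = QIdx Ls'.1 i - Tprev Ls'.1 i :=
    fun i hi => congrArg (fun bl : Blk d => bl.1.1.1) (congrFun h ⟨i, hi⟩)
  have hlen2 : ∀ i (hi : i < N),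
      tIdx Ls.1 i - 1 - QIdx Ls.1 i = tIdx Ls'.1 i - 1 - QIdx Ls'.1 i :=
    fun i hi => congrArg (fun bl : Blk d => bl.2.1.1.1) (congrFun h ⟨i, hi⟩)
  have hdisp1 : ∀ i (hi : i < N),
      w.1 (QIdx Ls.1 i) - w.1 (Tprev Ls.1 i)
        = w'.1 (QIdx Ls'.1 i) - w'.1 (Tprev Ls'.1 i) :=
    fun i hi => congrArg (fun bl : Blk d => bl.1.1.2) (congrFun h ⟨i, hi⟩)
  have hdisp2 : ∀ i (hi : i < N),
      w.1 (tIdx Ls.1 i - 1) - w.1 (QIdx Ls.1 i)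
        = w'.1 (tIdx Ls'.1 i - 1) - w'.1 (QIdx Ls'.1 i) :=
    fun i hi => congrArg (fun bl : Blk d => bl.2.1.1.2) (congrFun h ⟨i, hi⟩)
  have hvec : ∀ i (hi : i < N),
      w.1 (tIdx Ls.1 i) - w.1 (tIdx Ls.1 i - 1)
        = w'.1 (tIdx Ls'.1 i) - w'.1 (tIdx Ls'.1 i - 1) :=
    fun i hi => congrArg (fun bl : Blk d => bl.2.2.2.1) (congrFun h ⟨i, hi⟩)
  have hfn1 : ∀ i (hi : i < N),
      trunc w.1 (Tprev Ls.1 i) (QIdx Ls.1 i - Tprev Ls.1 i)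
        = trunc w'.1 (Tprev Ls'.1 i) (QIdx Ls'.1 i - Tprev Ls'.1 i) :=
    fun i hi => congrArg (fun bl : Blk d => (bl.1.2.1 : ℕ → Pt d)) (congrFun h ⟨i, hi⟩)
  have hfn2 : ∀ i (hi : i < N),
      trunc w.1 (QIdx Ls.1 i) (tIdx Ls.1 i - 1 - QIdx Ls.1 i)
        = trunc w'.1 (QIdx Ls'.1 i) (tIdx Ls'.1 i - 1 - QIdx Ls'.1 i) :=
    fun i hi => congrArg (fun bl : Blk d => (bl.2.1.2.1 : ℕ → Pt d)) (congrFun h ⟨i, hi⟩)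
  -- breakpoints agree
  have htimes : ∀ i, i ≤ N → Tprev Ls.1 i = Tprev Ls'.1 i ∧
      ∀ k, k < i → tIdx Ls.1 k = tIdx Ls'.1 k ∧ QIdx Ls.1 k = QIdx Ls'.1 k := by
    intro i
    induction i with
    | zero => exact fun _ => ⟨rfl, by omega⟩
    | succ i ih =>
      intro hi1
      obtain ⟨hT, hprev⟩ := ih (by omega)
      have hi : i < N := by omega
      have o1 := Tprev_le_QIdx hL (show i < Ls.1.card by omega)
      have o2 := QIdx_le hL (show i < Ls.1.card by omega)
      have o3 := tIdx_pos hL (by omega) (show i < Ls.1.card by omega)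
      have o1' := Tprev_le_QIdx hL' (show i < Ls'.1.card by omega)
      have o2' := QIdx_le hL' (show i < Ls'.1.card by omega)
      have o3' := tIdx_pos hL' (by omega) (show i < Ls'.1.card by omega)
      have e1 := hlen1 i hi
      have e2 := hlen2 i hi
      have hQ : QIdx Ls.1 i = QIdx Ls'.1 i := by omega
      have ht : tIdx Ls.1 i = tIdx Ls'.1 i := by omega
      refine ⟨ht, ?_⟩
      intro k hk
      rcases Nat.lt_or_ge k i with hki | hki
      · exact hprev k hki
      · have hki2 : k = i := by omega
        rw [hki2]
        exact ⟨ht, hQ⟩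
  -- lengths agree
  have hnn : n = n' := by
    have h1 := tIdx_last hL (by omega)
    have h2 := tIdx_last hL' (by omega)
    have h3 := ((htimes N le_rfl).2 (N - 1) (by omega)).1
    rw [hcard] at h1
    rw [hcard'] at h2
    omega
  subst hnn
  -- anchors agree
  have hanch : ∀ i, i ≤ N → w.1 (Tprev Ls.1 i) = w'.1 (Tprev Ls'.1 i) := by
    intro i
    induction i with
    | zero =>
      intro _
      show w.1 0 = w'.1 0
      rw [w.2.1, w'.2.1]
    | succ i ih =>
      intro hi1
      have hi : i < N := by omega
      have key : w.1 (tIdx Ls.1 i) = w.1 (Tprev Ls.1 i)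
          + ((w.1 (QIdx Ls.1 i) - w.1 (Tprev Ls.1 i))
            + (w.1 (tIdx Ls.1 i - 1) - w.1 (QIdx Ls.1 i))
            + (w.1 (tIdx Ls.1 i) - w.1 (tIdx Ls.1 i - 1))) := by abel
      have key' : w'.1 (tIdx Ls'.1 i) = w'.1 (Tprev Ls'.1 i)
          + ((w'.1 (QIdx Ls'.1 i) - w'.1 (Tprev Ls'.1 i))
            + (w'.1 (tIdx Ls'.1 i - 1) - w'.1 (QIdx Ls'.1 i))
            + (w'.1 (tIdx Ls'.1 i) - w'.1 (tIdx Ls'.1 i - 1))) := by abel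
      show w.1 (tIdx Ls.1 i) = w'.1 (tIdx Ls'.1 i)
      rw [key, key', hdisp1 i hi, hdisp2 i hi, hvec i hi, ih (by omega)]
  -- walks agree
  have hwalk : ∀ j, w.1 j = w'.1 j := by
    have hseg : ∀ i, i < N → ∀ j, Tprev Ls.1 i ≤ j → j ≤ tIdx Ls.1 i → w.1 j = w'.1 j := by
      intro i hi j hj1 hj2
      have o1 := Tprev_le_QIdx hL (show i < Ls.1.card by omega)
      have o2 := QIdx_le hL (show i < Ls.1.card by omega)
      have o3 := tIdx_pos hL (by omega) (show i < Ls.1.card by omega)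
      have hTeq := (htimes i (by omega)).1
      have hQeq := ((htimes (i + 1) (by omega)).2 i (by omega)).2
      have hteq := ((htimes (i + 1) (by omega)).2 i (by omega)).1
      have ha : w.1 (Tprev Ls.1 i) = w'.1 (Tprev Ls.1 i) := by
        have := hanch i (by omega)
        rw [← hTeq] at this
        exact this
      rcases Nat.lt_or_ge j (QIdx Ls.1 i + 1) with hcase | hcase
      · have h1 := congrFun (hfn1 i hi) (j - Tprev Ls.1 i)
        rw [← hTeq, ← hQeq] at h1
        unfold trunc at h1
        have hmin : min (j - Tprev Ls.1 i) (QIdx Ls.1 i - Tprev Ls.1 i)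
            = j - Tprev Ls.1 i := by omega
        rw [hmin] at h1
        have harg : j - Tprev Ls.1 i + Tprev Ls.1 i = j := by omega
        rw [harg] at h1
        calc w.1 j = (w.1 j - w.1 (Tprev Ls.1 i)) + w.1 (Tprev Ls.1 i) := by abel
          _ = (w'.1 j - w'.1 (Tprev Ls.1 i)) + w'.1 (Tprev Ls.1 i) := by rw [h1, ha]
          _ = w'.1 j := by abel
      · rcases Nat.lt_or_ge j (tIdx Ls.1 i) with hcase2 | hcase2
        · have haQ : w.1 (QIdx Ls.1 i) = w'.1 (QIdx Ls.1 i) := by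
            have d1 := hdisp1 i hi
            rw [← hTeq, ← hQeq] at d1
            calc w.1 (QIdx Ls.1 i)
                = (w.1 (QIdx Ls.1 i) - w.1 (Tprev Ls.1 i)) + w.1 (Tprev Ls.1 i) := by abel
              _ = (w'.1 (QIdx Ls.1 i) - w'.1 (Tprev Ls.1 i)) + w'.1 (Tprev Ls.1 i) := by
                  rw [d1, ha]
              _ = w'.1 (QIdx Ls.1 i) := by abel
          have h1 := congrFun (hfn2 i hi) (j - QIdx Ls.1 i)
          rw [← hQeq, ← hteq] at h1
          unfold trunc at h1
          have hmin : min (j - QIdx Ls.1 i) (tIdx Ls.1 i - 1 - QIdx Ls.1 i)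
              = j - QIdx Ls.1 i := by omega
          rw [hmin] at h1
          have harg : j - QIdx Ls.1 i + QIdx Ls.1 i = j := by omega
          rw [harg] at h1
          calc w.1 j = (w.1 j - w.1 (QIdx Ls.1 i)) + w.1 (QIdx Ls.1 i) := by abel
            _ = (w'.1 j - w'.1 (QIdx Ls.1 i)) + w'.1 (QIdx Ls.1 i) := by rw [h1, haQ]
            _ = w'.1 j := by abel
        · have hj : j = tIdx Ls.1 i := by omega
          have h2 : w.1 (tIdx Ls.1 i) = w'.1 (tIdx Ls'.1 i) := hanch (i + 1) (by omega)
          rw [← hteq] at h2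
          rw [hj]
          exact h2
    intro j
    rcases Nat.lt_or_ge (n + 1) j with hj | hj
    · have h1 := w.2.2.1 j (by omega)
      have h2 := w'.2.2.1 j (by omega)
      have h3 := w.2.2.1 (n + 1) (by omega)
      have h4 := w'.2.2.1 (n + 1) (by omega)
      have hlast : tIdx Ls.1 (Ls.1.card - 1) = n + 1 := tIdx_last hL (by omega)
      have h5 : w.1 (n + 1) = w'.1 (n + 1) := by
        apply hseg (N - 1) (by omega) (n + 1)
        · have hle := Tprev_le_QIdx hL (show N - 1 < Ls.1.card by omega)
          have hle2 := QIdx_le hL (show N - 1 < Ls.1.card by omega)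
          have : Ls.1.card - 1 = N - 1 := by omega
          rw [this] at hlast
          omega
        · have : Ls.1.card - 1 = N - 1 := by omega
          rw [this] at hlast
          omega
      rw [h1, h2, ← h3, ← h4]
      exact h5
    · have hlast : tIdx Ls.1 (Ls.1.card - 1) = n + 1 := tIdx_last hL (by omega)
      obtain ⟨i, hiN, hT, ht⟩ := lace_cover hL (Ls.1.card - 1) (by omega) j (by omega)
      exact hseg i (by omega) j hT ht
  -- endpoints agree
  have hx : x = x' := by
    have h3 := w.2.2.1 (n + 1) le_rfl
    have h4 := w'.2.2.1 (n + 1) le_rfl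
    rw [← h3, ← h4]
    exact hwalk (n + 1)
  subst hx
  -- laces agree
  have hLL : Ls.1 = Ls'.1 := by
    have hteq : ∀ i, i < N → tIdx Ls.1 i = tIdx Ls'.1 i :=
      fun i hi => ((htimes (i + 1) (by omega)).2 i (by omega)).1
    have hseq : ∀ i, i < N → sIdx Ls.1 i = sIdx Ls'.1 i := by
      intro i hi
      cases i with
      | zero => rw [sIdx_zero hL (by omega), sIdx_zero hL' (by omega)]
      | succ k =>
        have hQ : QIdx Ls.1 k = sIdx Ls.1 (k + 1) := by
          unfold QIdx
          rw [if_pos (by omega)]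
        have hQ' : QIdx Ls'.1 k = sIdx Ls'.1 (k + 1) := by
          unfold QIdx
          rw [if_pos (by omega)]
        have hQeq := ((htimes (k + 1) (by omega)).2 k (by omega)).2
        omega
    rw [lace_eq_image hL, lace_eq_image hL', hcard, hcard']
    apply Finset.image_congr
    intro i hi
    rw [Finset.mem_coe, Finset.mem_range] at hi
    show (sIdx Ls.1 i, tIdx Ls.1 i) = (sIdx Ls'.1 i, tIdx Ls'.1 i)
    rw [hseq i hi, hteq i hi]
  have hwfun : w = w' := Subtype.ext (funext hwalk)
  have hLs : Ls = Ls' := Subtype.ext hLL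
  subst hwfun
  subst hLs
  rfl

end Assembly

/-- **Proposition 3.3, eq. (3.5)** (diagrammatic bound): for every `d ≥ 1`,
`λ ∈ (0,1]`, `z ∈ [0, z_c(λ))` and `N ≥ 1`,
`Σ_x Π_z^{(N)}(x) ≤ (dzλ)^N (B_z^λ)^N` in `[0,∞]`. -/
theorem diagrammatic_bound_PiN (d : ℕ) (hd : 1 ≤ d) (lam : ℝ)
    (hlam0 : 0 < lam) (hlam1 : lam ≤ 1) (z : ℝ) (hz0 : 0 ≤ z) (hz : z < zc d lam)
    (N : ℕ) (hN : 1 ≤ N) :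
    ∑' x : Pt d, PiN d lam z N x ≤
      ENNReal.ofReal ((d : ℝ) * z * lam) ^ N * bubble d lam z ^ N := by
  have hNpos : 0 < N := hN
  calc ∑' x : Pt d, PiN d lam z N x
      = ∑' σ : Sig d N, gfun d lam z N σ := tsum_PiN_eq
    _ = ∑' σ : ↥(Function.support (gfun d lam z N)), gfun d lam z N σ.1 :=
        (tsum_subtype_support (gfun d lam z N)).symm
    _ ≤ ∑' σ : ↥(Function.support (gfun d lam z N)),
          chainWt lam z ((0 : Pt d), (0 : Pt d))
            (iota hlam0 hNpos σ.1 (Function.mem_support.1 σ.2)) := by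
        apply ENNReal.tsum_le_tsum
        rintro ⟨⟨x, n, w, Ls⟩, hs⟩
        have hσ : gfun d lam z N ⟨x, n, w, Ls⟩ ≠ 0 := Function.mem_support.1 hs
        have hL := (lacesN_spec Ls.2).1
        have hcard := (lacesN_spec Ls.2).2
        have hU := support_hU hlam0 hσ
        exact pointwise_bound (b := n + 1) hlam0 hlam1 hz0 hNpos w.2 hL hcard hU
    _ ≤ ∑' f : Fin N → Blk d, chainWt lam z ((0 : Pt d), (0 : Pt d)) f :=
        ENNReal.tsum_comp_le_tsum_of_injective (iota_injective hlam0 hNpos) _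
    _ ≤ (ENNReal.ofReal ((d : ℝ) * z * lam) * bubble d lam z) ^ N :=
        chain_sum_le hd hlam0.le hlam1 hz0 N _
    _ = ENNReal.ofReal ((d : ℝ) * z * lam) ^ N * bubble d lam z ^ N := mul_pow _ _ N

end PrudentWalk
end
end
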